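/- arXiv:2509.01096 — 8 statements merged into one kernel-verified Lean document; each statement's English description precedes it below -/
import Mathlib

section
/- For integers k ≥ 1 and n ≥ 2k + 1, the k-circulant graph on n vertices is 2k-connected. -/
/-- A simple graph `G` on a finite vertex type is `k`-connected if it has more than `k`
vertices and deleting any set of fewer than `k` vertices leaves a connected graph. -/
def KConnected {V : Type*} [Fintype V] (G : SimpleGraph V) (k : ℕ) : Prop :=
  k < Fintype.card V ∧
    ∀ s : Finset V, s.card < k → (G.induce {v : V | v ∉ s}).Connected

/-- Cyclic distance between `i` and `j` among `n` points on a circle: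
`min (|i - j|) (n - |i - j|)`. -/
def cdist (n i j : ℕ) : ℕ := min (max i j - min i j) (n - (max i j - min i j))

/-- The `k`-circulant graph on `n` vertices: `i ~ j` iff `1 ≤ cyclic distance ≤ k`. -/
def circulant (n k : ℕ) : SimpleGraph (Fin n) where
  Adj i j := i ≠ j ∧ cdist n i.1 j.1 ≤ k
  symm := by
    constructor
    intro i j h
    exact ⟨h.1.symm, by simpa [cdist, Nat.max_comm, Nat.min_comm] using h.2⟩
  loopless := ⟨fun i h => h.1 rfl⟩

open Fin.NatCast

lemma adj_add (k n : ℕ) [NeZero n] (hn : 2 * k + 1 ≤ n) (u : Fin n) (t : ℕ)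
    (h1 : 1 ≤ t) (h2 : t ≤ k) : (circulant n k).Adj u (u + (t : Fin n)) := by
  
  have htn : t % n = t := Nat.mod_eq_of_lt (by omega)
  have hval : (u + (t : Fin n)).val = (u.val + t) % n := by
    rw [Fin.add_def, Fin.val_natCast, htn]
  have hu : u.val < n := u.isLt
  have hmod : (u.val + t) % n = if u.val + t < n then u.val + t else u.val + t - n := by
    split_ifs with h
    · exact Nat.mod_eq_of_lt h
    · rw [Nat.mod_eq_sub_mod (by omega), Nat.mod_eq_of_lt (by omega)]
  constructor
  · intro h
    have := congrArg Fin.val h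
    rw [hval, hmod] at this
    split_ifs at this <;> omega
  · show cdist n u.val (u + (t : Fin n)).val ≤ k
    rw [hval, hmod]
    unfold cdist
    split_ifs <;> omega

lemma reach_aux (k n : ℕ) [NeZero n] (hk : 1 ≤ k) (hn : 2 * k + 1 ≤ n) (s : Finset (Fin n)) :
    ∀ d : ℕ, d < n → ∀ (u : Fin n) (hu : u ∈ {v : Fin n | v ∉ s})
      (hv : u + (d : Fin n) ∈ {v : Fin n | v ∉ s}),
      ((Finset.Ico 1 d).filter (fun t : ℕ => (u + (t : Fin n)) ∈ s)).card < k →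
      ((circulant n k).induce {v : Fin n | v ∉ s}).Reachable ⟨u, hu⟩ ⟨u + (d : Fin n), hv⟩ := by
  intro d
  induction d using Nat.strong_induction_on with
  | _ d ih =>
    intro hdn u hu hv hcount
    rcases Nat.eq_zero_or_pos d with hd0 | hd1
    · subst hd0
      have h0 : (⟨u + ((0 : ℕ) : Fin n), hv⟩ : {v : Fin n | v ∉ s}) = ⟨u, hu⟩ :=
        Subtype.ext (by simp)
      rw [h0]
    rcases le_or_gt d k with hdk | hdk
    · -- direct edge
      exact SimpleGraph.Adj.reachable (adj_add k n hn u d hd1 hdk)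
    · -- pick an unremoved vertex among the next k
      have hex : ∃ t ∈ Finset.Ico 1 (k + 1), (u + (t : Fin n)) ∉ s := by
        by_contra hall
        push_neg at hall
        have hsub : Finset.Ico 1 (k + 1) ⊆
            (Finset.Ico 1 d).filter (fun t : ℕ => (u + (t : Fin n)) ∈ s) := by
          intro t ht
          simp only [Finset.mem_Ico] at ht
          simp only [Finset.mem_filter, Finset.mem_Ico]
          exact ⟨⟨ht.1, by omega⟩, hall t (by simp only [Finset.mem_Ico]; omega)⟩
        have := Finset.card_le_card hsub
        rw [Nat.card_Ico] at this
        omega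
      obtain ⟨t, ht, hts⟩ := hex
      simp only [Finset.mem_Ico] at ht
      have ht1 : 1 ≤ t := ht.1
      have htk : t ≤ k := by omega
      have htd : t ≤ d := by omega
      set u' : Fin n := u + (t : Fin n) with hu'def
      have hcast : u' + ((d - t : ℕ) : Fin n) = u + (d : Fin n) := by
        rw [hu'def, add_assoc, ← Nat.cast_add]
        congr 2
        omega
      have hv' : u' + ((d - t : ℕ) : Fin n) ∈ {v : Fin n | v ∉ s} := by
        rw [hcast]; exact hv
      have hcount' : ((Finset.Ico 1 (d - t)).filter
          (fun r : ℕ => (u' + (r : Fin n)) ∈ s)).card < k := by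
        have hle : ((Finset.Ico 1 (d - t)).filter (fun r : ℕ => (u' + (r : Fin n)) ∈ s)).card ≤
            ((Finset.Ico 1 d).filter (fun r : ℕ => (u + (r : Fin n)) ∈ s)).card := by
          apply Finset.card_le_card_of_injOn (fun r => t + r)
          · intro r hr
            simp only [Finset.mem_coe, Finset.mem_filter, Finset.mem_Ico] at hr ⊢
            refine ⟨⟨by omega, by omega⟩, ?_⟩
            rw [Nat.cast_add, ← add_assoc]
            exact hr.2
          · intro a _ b _ hab
            simp only at hab
            omega
        omega
      have hrec := ih (d - t) (by omega) (by omega) u' hts hv' hcount'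
      have hadj : ((circulant n k).induce {v : Fin n | v ∉ s}).Adj ⟨u, hu⟩ ⟨u', hts⟩ :=
        adj_add k n hn u t ht1 htk
      have heq : (⟨u' + ((d - t : ℕ) : Fin n), hv'⟩ : {v : Fin n | v ∉ s}) =
          ⟨u + (d : Fin n), hv⟩ := Subtype.ext hcast
      exact (hadj.reachable).trans (heq ▸ hrec)

/-- For `k ≥ 1` and `n ≥ 2k + 1`, the `k`-circulant graph on `n` vertices is
`2k`-connected. -/
theorem stmt2 (k n : ℕ) (hk : 1 ≤ k) (hn : 2 * k + 1 ≤ n) :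
    KConnected (circulant n k) (2 * k) := by
  haveI : NeZero n := ⟨by omega⟩
  constructor
  · simpa using (by omega : 2 * k < n)
  intro s hs
  rw [SimpleGraph.connected_iff]
  have hne : ∃ v : Fin n, v ∉ s := by
    by_contra h
    push_neg at h
    have : s = Finset.univ := Finset.eq_univ_iff_forall.2 h
    rw [this, Finset.card_univ, Fintype.card_fin] at hs
    omega
  refine ⟨?_, by obtain ⟨v, hv⟩ := hne; exact ⟨⟨v, hv⟩⟩⟩
  rintro ⟨u, hu⟩ ⟨v, hv⟩
  rcases eq_or_ne u v with rfl | huv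
  · exact SimpleGraph.Reachable.refl _
  -- forward arc length d, backward arc length d' = n - d
  set d : ℕ := (v - u : Fin n).val with hd
  set d' : ℕ := (u - v : Fin n).val with hd'
  have hdn : d < n := (v - u).isLt
  have hd'n : d' < n := (u - v).isLt
  have hud : u + (d : Fin n) = v := by
    rw [hd, Fin.cast_val_eq_self]
    abel
  have hvd : v + ((d' : ℕ) : Fin n) = u := by
    rw [hd', Fin.cast_val_eq_self]
    abel
  have hdpos : 1 ≤ d := by
    rcases Nat.eq_zero_or_pos d with h0 | h1
    · exfalso; apply huv
      have : ((d : ℕ) : Fin n) = 0 := by rw [h0]; simp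
      rw [this, add_zero] at hud
      exact hud.symm ▸ rfl
    · exact h1
  have hsum : d + d' = n := by
    have h1 : ((d : ℕ) : Fin n) + ((d' : ℕ) : Fin n) = 0 := by
      rw [hd, hd', Fin.cast_val_eq_self, Fin.cast_val_eq_self]; abel
    have h2 : (d + d') % n = 0 := by
      have := congrArg Fin.val h1
      simp only [Fin.add_def, Fin.val_natCast, Fin.val_zero] at this
      rwa [Nat.mod_eq_of_lt hdn, Nat.mod_eq_of_lt hd'n] at this
    have hlt : d + d' < 2 * n := by omega
    rcases Nat.lt_or_ge (d + d') n with h | h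
    · rw [Nat.mod_eq_of_lt h] at h2
      omega
    · rw [Nat.mod_eq_sub_mod h, Nat.mod_eq_of_lt (by omega)] at h2
      omega
  -- the two arc counts
  set A := (Finset.Ico 1 d).filter (fun t : ℕ => (u + (t : Fin n)) ∈ s) with hA
  set B := (Finset.Ico 1 d').filter (fun t : ℕ => (v + (t : Fin n)) ∈ s) with hB
  have hAcard : A.card = (A.image (fun t : ℕ => u + (t : Fin n))).card := by
    rw [Finset.card_image_of_injOn]
    intro a ha b hb hab
    simp only [hA, Finset.mem_coe, Finset.mem_filter, Finset.mem_Ico] at ha hb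
    have := congrArg Fin.val (add_left_cancel hab)
    rw [Fin.val_natCast, Fin.val_natCast, Nat.mod_eq_of_lt (by omega),
      Nat.mod_eq_of_lt (by omega)] at this
    exact this
  have hBcard : B.card = (B.image (fun t : ℕ => v + (t : Fin n))).card := by
    rw [Finset.card_image_of_injOn]
    intro a ha b hb hab
    simp only [hB, Finset.mem_coe, Finset.mem_filter, Finset.mem_Ico] at ha hb
    have := congrArg Fin.val (add_left_cancel hab)
    rw [Fin.val_natCast, Fin.val_natCast, Nat.mod_eq_of_lt (by omega),
      Nat.mod_eq_of_lt (by omega)] at this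
    exact this
  have hdisj : Disjoint (A.image (fun t : ℕ => u + (t : Fin n)))
      (B.image (fun t : ℕ => v + (t : Fin n))) := by
    rw [Finset.disjoint_left]
    rintro x hx hy
    simp only [Finset.mem_image, hA, hB, Finset.mem_filter, Finset.mem_Ico] at hx hy
    obtain ⟨t, ⟨⟨ht1, ht2⟩, _⟩, hxt⟩ := hx
    obtain ⟨r, ⟨⟨hr1, hr2⟩, _⟩, hxr⟩ := hy
    -- u + t = v + r = u + d + r  ⇒  t ≡ d + r (mod n), contradiction
    have : u + (t : Fin n) = u + ((d : ℕ) : Fin n) + ((r : ℕ) : Fin n) := by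
      rw [hud, hxt, hxr]
    rw [add_assoc, ← Nat.cast_add] at this
    have hval := congrArg Fin.val (add_left_cancel this)
    rw [Fin.val_natCast, Fin.val_natCast, Nat.mod_eq_of_lt (by omega),
      Nat.mod_eq_of_lt (by omega)] at hval
    omega
  have hsub : (A.image (fun t : ℕ => u + (t : Fin n))) ∪
      (B.image (fun t : ℕ => v + (t : Fin n))) ⊆ s := by
    intro x hx
    rcases Finset.mem_union.1 hx with h | h <;>
    · simp only [Finset.mem_image, hA, hB, Finset.mem_filter] at h
      obtain ⟨t, ⟨_, hts⟩, hxt⟩ := h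
      exact hxt ▸ hts
  have hcards : A.card + B.card ≤ s.card := by
    calc A.card + B.card
        = (A.image (fun t : ℕ => u + (t : Fin n))).card +
          (B.image (fun t : ℕ => v + (t : Fin n))).card := by rw [hAcard, hBcard]
      _ = ((A.image (fun t : ℕ => u + (t : Fin n))) ∪
          (B.image (fun t : ℕ => v + (t : Fin n)))).card :=
          (Finset.card_union_of_disjoint hdisj).symm
      _ ≤ s.card := Finset.card_le_card hsub
  rcases Nat.lt_or_ge A.card k with hAk | hAk
  · have := reach_aux k n hk hn s d hdn u hu (by rw [hud]; exact hv) hAk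
    have heq : (⟨u + ((d : ℕ) : Fin n), (by rw [hud]; exact hv)⟩ : {w : Fin n | w ∉ s}) = ⟨v, hv⟩ :=
      Subtype.ext hud
    exact heq ▸ this
  · have hBk : B.card < k := by omega
    have := reach_aux k n hk hn s d' hd'n v hv (by rw [hvd]; exact hu) hBk
    have heq : (⟨v + ((d' : ℕ) : Fin n), (by rw [hvd]; exact hu)⟩ : {w : Fin n | w ∉ s}) = ⟨u, hu⟩ :=
      Subtype.ext hvd
    exact (heq ▸ this).symm
end

section
/- Let k ≥ 1 and let G be a graph on vertices {0,...,n−1} in convex position (in this cyclic order) with minimum degree at least 2k, where n ≥ 2k+1. Then some edge of G crosses at least k² − k other edges, where crossing of chords is defined by cyclic interleaving of endpoints. -/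
/-- `c` lies strictly inside the cyclic open interval from `a` to `b`. -/
abbrev cbtw (n a b c : ℕ) : Prop :=
  0 < (c + n - a) % n ∧ (c + n - a) % n < (b + n - a) % n

/-- Chords `{a,b}` and `{c,d}` (all four endpoints distinct) cross iff exactly one of
`c, d` lies in the cyclic open interval from `a` to `b`. -/
abbrev crossN (n a b c d : ℕ) : Prop :=
  a ≠ c ∧ a ≠ d ∧ b ≠ c ∧ b ≠ d ∧ Xor (cbtw n a b c) (cbtw n a b d)

/-- Number of edges of `G` crossing the chord `{a,b}`. -/
def crossCount {n : ℕ} (G : SimpleGraph (Fin n)) [DecidableRel G.Adj]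
    (a b : Fin n) : ℕ :=
  (G.edgeFinset.filter fun e => ∃ c d : Fin n, e = s(c, d) ∧ crossN n a.1 b.1 c.1 d.1).card

/-- relative cyclic coordinate of `x` with respect to base point `a`. -/
abbrev rho (n a x : ℕ) : ℕ := (x + n - a) % n

lemma rho_inj' (n a x y : ℕ) (ha : a ≤ n) (hx : x < n) (hy : y < n)
    (h : rho n a x = rho n a y) : x = y := by
  have h' : Nat.ModEq n (x + n - a) (y + n - a) := h
  have h2 := h'.add_right a
  have hx' : x + n - a + a = x + n := by omega
  have hy' : y + n - a + a = y + n := by omega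
  rw [hx', hy'] at h2
  have h3 : (x + n) % n = (y + n) % n := h2
  rw [Nat.add_mod_right, Nat.add_mod_right, Nat.mod_eq_of_lt hx, Nat.mod_eq_of_lt hy] at h3
  exact h3

lemma rho_sigma (n a j : ℕ) (ha : a ≤ n) (hj : j < n) :
    rho n a ((a + j) % n) = j := by
  have hn : 0 < n := by omega
  have h2 : Nat.ModEq n ((a + j) % n + n) (j + n + a) := by
    have h := (Nat.mod_modEq (a + j) n).add_right n
    have e : a + j + n = j + n + a := by ring
    rw [e] at h
    exact h
  have h1 : (a + j) % n + n - a + a = (a + j) % n + n := by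
    have : a ≤ (a + j) % n + n := by omega
    omega
  have h3 : Nat.ModEq n ((a + j) % n + n - a + a) (j + n + a) := by rw [h1]; exact h2
  have h4 : Nat.ModEq n ((a + j) % n + n - a) (j + n) := Nat.ModEq.add_right_cancel' a h3
  have h5 : ((a + j) % n + n - a) % n = (j + n) % n := h4
  show ((a + j) % n + n - a) % n = j
  rw [h5, Nat.add_mod_right, Nat.mod_eq_of_lt hj]

lemma mod_diff (n a x y : ℕ) (hn : 0 < n) (ha : a ≤ n) (hx : x ≤ n) (hy : y ≤ n) :
    (rho n a y + n - rho n a x) % n = (y + n - x) % n := by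
  set A := (y + n - a) % n with hA
  set B := (x + n - a) % n with hB
  have hBlt : B < n := Nat.mod_lt _ hn
  have h1 : A + n - B + B = A + n := by omega
  have h2 : Nat.ModEq n (A + n) (y + n - a + n) := (Nat.mod_modEq (y + n - a) n).add_right n
  have h3 : y + n - a + n = (y + n - x) + (x + n - a) := by omega
  have h4 : Nat.ModEq n ((y + n - x) + (x + n - a)) ((y + n - x) + B) :=
    Nat.ModEq.add_left _ (Nat.mod_modEq (x + n - a) n).symm
  have h5 : Nat.ModEq n (A + n - B + B) ((y + n - x) + B) := by
    rw [h1]; exact h2.trans (h3 ▸ h4)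
  exact Nat.ModEq.add_right_cancel' B h5

lemma gaussRev : ∀ K : ℕ, 2 * ∑ i ∈ Finset.range K, (K - i) = K * (K + 1) := by
  intro K
  induction K with
  | zero => simp
  | succ m ih =>
    rw [Finset.sum_range_succ']
    have e : ∀ i ∈ Finset.range m, (m + 1 - (i + 1)) = m - i := by intro i _; omega
    rw [Finset.sum_congr rfl e]
    have : m + 1 - 0 = m + 1 := by omega
    rw [this, Nat.mul_add, ih]
    ring

lemma sum_lb (k d : ℕ) (hk : 1 ≤ k) (hd : k ≤ d) :
    k ^ 2 - k ≤ ∑ i ∈ Finset.Ico 1 d, (2 * k - min i (k - 1) - min (d - i) (k - 1)) := by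
  set g : ℕ → ℕ := fun x => k - min x (k - 1) with hg
  have step1 : ∑ i ∈ Finset.Ico 1 d, (g i + g (d - i)) ≤
      ∑ i ∈ Finset.Ico 1 d, (2 * k - min i (k - 1) - min (d - i) (k - 1)) := by
    apply Finset.sum_le_sum
    intro i hi
    simp only [hg]
    have h1 : min i (k-1) ≤ k - 1 := min_le_right _ _
    have h2 : min (d-i) (k-1) ≤ k - 1 := min_le_right _ _
    omega
  have step2 : ∑ i ∈ Finset.Ico 1 d, g (d - i) = ∑ i ∈ Finset.Ico 1 d, g i := by
    apply Finset.sum_nbij' (fun i => d - i) (fun j => d - j) <;>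
      intro i hi <;> simp only [Finset.mem_Ico] at * <;> omega
  have step3 : ∑ i ∈ Finset.Ico 1 d, (g i + g (d - i)) = 2 * ∑ i ∈ Finset.Ico 1 d, g i := by
    rw [Finset.sum_add_distrib, step2]; ring
  have split : ∑ i ∈ Finset.Ico 1 k, g i + ∑ i ∈ Finset.Ico k d, g i
      = ∑ i ∈ Finset.Ico 1 d, g i := Finset.sum_Ico_consecutive _ hk hd
  have lb1 : ∑ i ∈ Finset.Ico 1 k, (k - i) ≤ ∑ i ∈ Finset.Ico 1 k, g i := by
    apply Finset.sum_le_sum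
    intro i hi
    simp only [Finset.mem_Ico] at hi
    simp only [hg]
    omega
  have lb2 : (d - k) * 1 ≤ ∑ i ∈ Finset.Ico k d, g i := by
    calc (d - k) * 1 = ∑ _i ∈ Finset.Ico k d, 1 := by
          rw [Finset.sum_const, Nat.card_Ico, smul_eq_mul]
    _ ≤ ∑ i ∈ Finset.Ico k d, g i := by
        apply Finset.sum_le_sum
        intro i _
        simp only [hg]
        have : min i (k-1) ≤ k - 1 := min_le_right _ _
        omega
  have gauss : 2 * ∑ i ∈ Finset.Ico 1 k, (k - i) = (k - 1) * k := by
    rw [Finset.sum_Ico_eq_sum_range]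
    have e : ∀ i ∈ Finset.range (k - 1), (k - (1 + i)) = (k - 1) - i := by intro i _; omega
    rw [Finset.sum_congr rfl e, gaussRev]
    congr 1
    omega
  have hpow : k ^ 2 = k * k := by ring
  have hkk : (k - 1) * k + k = k * k := by
    obtain ⟨j, rfl⟩ : ∃ j, k = j + 1 := ⟨k - 1, by omega⟩
    simp [Nat.add_sub_cancel]
    ring
  omega

set_option maxHeartbeats 1600000 in
/-- If a graph on `n ≥ 2k+1` vertices in convex position has minimum degree at least `2k`,
then some edge crosses at least `k² − k` other edges. -/
theorem stmt4 (k n : ℕ) (hk : 1 ≤ k) (hn : 2 * k + 1 ≤ n)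
    (G : SimpleGraph (Fin n)) [DecidableRel G.Adj]
    (hdeg : ∀ v : Fin n, 2 * k ≤ G.degree v) :
    ∃ a b : Fin n, G.Adj a b ∧ k ^ 2 - k ≤ crossCount G a b := by
  classical
  have hn0 : 0 < n := by omega
  have hdeg' : ∀ v : Fin n, 2 * k ≤ (G.neighborFinset v).card := hdeg
  set dd : Fin n × Fin n → ℕ := fun p => (p.2.1 + n - p.1.1) % n with hdd
  set Q : Finset (Fin n × Fin n) :=
    Finset.univ.filter (fun p => G.Adj p.1 p.2 ∧ k ≤ dd p ∧ 2 * dd p ≤ n) with hQdef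
  have hQmem : ∀ p : Fin n × Fin n, p ∈ Q ↔ G.Adj p.1 p.2 ∧ k ≤ dd p ∧ 2 * dd p ≤ n := by
    intro p
    simp [hQdef]
  have hQne : Q.Nonempty := by
    set v0 : Fin n := ⟨0, hn0⟩ with hv0
    set N : Finset (Fin n) := G.neighborFinset v0 with hN
    have hNcard : 2 * k ≤ N.card := hdeg' v0
    have hNne : N.Nonempty := Finset.card_pos.mp (by omega)
    set N' : Finset (Fin n) := N.filter (fun w => k ≤ (N.filter (· ≤ w)).card) with hN'
    have hN'ne : N'.Nonempty := by
      refine ⟨N.max' hNne, ?_⟩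
      rw [hN', Finset.mem_filter]
      refine ⟨N.max'_mem hNne, ?_⟩
      have : N.filter (· ≤ N.max' hNne) = N := by
        apply Finset.filter_true_of_mem
        intro x hx
        exact N.le_max' x hx
      rw [this]; omega
    obtain ⟨u, huN', humin⟩ := Finset.exists_min_image N' id hN'ne
    rw [hN', Finset.mem_filter] at huN'
    obtain ⟨huN, hku⟩ := huN'
    have hpos : ∀ w ∈ N, 1 ≤ w.1 := by
      intro w hw
      rw [hN, SimpleGraph.mem_neighborFinset] at hw
      have : w ≠ v0 := (G.ne_of_adj hw).symm
      have : w.1 ≠ 0 := by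
        intro h
        exact this (Fin.ext (by rw [h]))
      omega
    have hlt : (N.filter (· < u)).card ≤ k - 1 := by
      by_contra hcon
      push_neg at hcon
      have hkle : k ≤ (N.filter (· < u)).card := by omega
      have hne2 : (N.filter (· < u)).Nonempty := Finset.card_pos.mp (by omega)
      set u' := (N.filter (· < u)).max' hne2 with hu'
      have hu'mem := (N.filter (· < u)).max'_mem hne2
      rw [Finset.mem_filter] at hu'mem
      have hsub : N.filter (· < u) ⊆ N.filter (· ≤ u') := by
        intro x hx
        rw [Finset.mem_filter] at hx ⊢
        exact ⟨hx.1, (N.filter (· < u)).le_max' x (Finset.mem_filter.mpr hx)⟩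
      have : u' ∈ N' := by
        rw [hN', Finset.mem_filter]
        exact ⟨hu'mem.1, le_trans hkle (Finset.card_le_card hsub)⟩
      have := humin u' this
      simp only [id] at this
      exact absurd (lt_of_le_of_lt this hu'mem.2) (lt_irrefl u)
    have hge : k + 1 ≤ (N.filter (fun w => ¬ w < u)).card := by
      have := Finset.card_filter_add_card_filter_not (s := N) (p := (· < u))
      omega
    have hval1 : k ≤ u.1 := by
      have himg : (N.filter (· ≤ u)).image Fin.val ⊆ Finset.Icc 1 u.1 := by
        intro x hx
        rw [Finset.mem_image] at hx
        obtain ⟨w, hw, rfl⟩ := hx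
        rw [Finset.mem_filter] at hw
        rw [Finset.mem_Icc]
        exact ⟨hpos w hw.1, hw.2⟩
      have hcardim : ((N.filter (· ≤ u)).image Fin.val).card = (N.filter (· ≤ u)).card :=
        Finset.card_image_of_injective _ Fin.val_injective
      have := Finset.card_le_card himg
      rw [hcardim, Nat.card_Icc] at this
      omega
    have hval2 : k + 1 ≤ n - u.1 := by
      have himg : (N.filter (fun w => ¬ w < u)).image Fin.val ⊆ Finset.Icc u.1 (n - 1) := by
        intro x hx
        rw [Finset.mem_image] at hx
        obtain ⟨w, hw, rfl⟩ := hx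
        rw [Finset.mem_filter] at hw
        rw [Finset.mem_Icc]
        have := w.isLt
        have : u ≤ w := not_lt.mp hw.2
        constructor
        · exact this
        · omega
      have hcardim : ((N.filter (fun w => ¬ w < u)).image Fin.val).card
          = (N.filter (fun w => ¬ w < u)).card :=
        Finset.card_image_of_injective _ Fin.val_injective
      have := Finset.card_le_card himg
      rw [hcardim, Nat.card_Icc] at this
      have hu1 : 1 ≤ u.1 := hpos u huN
      omega
    have hAdju : G.Adj v0 u := by rwa [hN, SimpleGraph.mem_neighborFinset] at huN
    have hulow : 1 ≤ u.1 := hpos u huN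
    have huln : u.1 < n := u.isLt
    by_cases h2u : 2 * u.1 ≤ n
    · refine ⟨(v0, u), (hQmem (v0, u)).mpr ⟨hAdju, ?_, ?_⟩⟩ <;>
      · have : dd (v0, u) = u.1 := by
          rw [hdd]
          show (u.1 + n - v0.1) % n = u.1
          have hv : v0.1 = 0 := rfl
          rw [hv]
          have : u.1 + n - 0 = u.1 + n := by omega
          rw [this, Nat.add_mod_right, Nat.mod_eq_of_lt huln]
        omega
    · refine ⟨(u, v0), (hQmem (u, v0)).mpr ⟨hAdju.symm, ?_, ?_⟩⟩ <;>
      · have : dd (u, v0) = n - u.1 := by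
          rw [hdd]
          show (v0.1 + n - u.1) % n = n - u.1
          have hv : v0.1 = 0 := rfl
          rw [hv]
          have e : 0 + n - u.1 = n - u.1 := by omega
          rw [e, Nat.mod_eq_of_lt (by omega)]
        omega
  obtain ⟨p, hpQ, hmin⟩ := Finset.exists_min_image Q dd hQne
  obtain ⟨a, b⟩ := p
  rw [hQmem] at hpQ
  obtain ⟨hAdj, hkδ, h2δ⟩ := hpQ
  set δ : ℕ := dd (a, b) with hδdef
  have hρb : rho n a.1 b.1 = δ := rfl
  have hρa : rho n a.1 a.1 = 0 := by
    show (a.1 + n - a.1) % n = 0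
    have : a.1 + n - a.1 = n := by omega
    rw [this, Nat.mod_self]
  have hδn : δ < n := Nat.mod_lt _ hn0
  set σ : ℕ → Fin n := fun i => (⟨(a.1 + i) % n, Nat.mod_lt _ hn0⟩ : Fin n) with hσdef
  have hρσ : ∀ i, i < n → rho n a.1 (σ i).1 = i := by
    intro i hi
    exact rho_sigma n a.1 i (le_of_lt a.isLt) hi
  have hρinj : ∀ x y : Fin n, rho n a.1 x.1 = rho n a.1 y.1 → x = y := by
    intro x y h
    exact Fin.ext (rho_inj' n a.1 x.1 y.1 (le_of_lt a.isLt) x.isLt y.isLt h)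
  -- key claim from minimality: in-arc neighbours of an interior vertex are close to it
  have hkey : ∀ i, 1 ≤ i → i < δ → ∀ w : Fin n, G.Adj (σ i) w → rho n a.1 w.1 ≤ δ →
      i - (k - 1) ≤ rho n a.1 w.1 ∧ rho n a.1 w.1 ≤ i + (k - 1) := by
    intro i hi1 hiδ w hadj hwδ
    set j := rho n a.1 w.1 with hj
    have hin : i < n := by omega
    have hρσi : rho n a.1 (σ i).1 = i := hρσ i hin
    have hji : j ≠ i := by
      intro h
      have : w = σ i := hρinj w (σ i) (by rw [← hj, h, hρσi])
      exact G.ne_of_adj hadj.symm this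
    by_contra hcon
    have hcase : j + k ≤ i ∨ i + k ≤ j := by omega
    have hσlt : (σ i).1 < n := (σ i).isLt
    rcases hcase with h | h
    · have hcalc : dd (w, σ i) = i - j := by
        rw [hdd]
        show ((σ i).1 + n - w.1) % n = i - j
        have e1 := mod_diff n a.1 w.1 (σ i).1 hn0 (le_of_lt a.isLt) (le_of_lt w.isLt)
          (le_of_lt hσlt)
        rw [hρσi, ← hj] at e1
        rw [← e1]
        have e2 : i + n - j = (i - j) + n := by omega
        rw [e2, Nat.add_mod_right, Nat.mod_eq_of_lt (by omega)]
      have hmem : (w, σ i) ∈ Q := by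
        rw [hQmem]
        refine ⟨hadj.symm, ?_, ?_⟩ <;> rw [hcalc] <;> omega
      have := hmin _ hmem
      rw [hcalc] at this
      omega
    · have hcalc : dd (σ i, w) = j - i := by
        rw [hdd]
        show (w.1 + n - (σ i).1) % n = j - i
        have e1 := mod_diff n a.1 (σ i).1 w.1 hn0 (le_of_lt a.isLt) (le_of_lt hσlt)
          (le_of_lt w.isLt)
        rw [hρσi, ← hj] at e1
        rw [← e1]
        have e2 : j + n - i = (j - i) + n := by omega
        rw [e2, Nat.add_mod_right, Nat.mod_eq_of_lt (by omega)]
      have hmem : (σ i, w) ∈ Q := by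
        rw [hQmem]
        refine ⟨hadj, ?_, ?_⟩ <;> rw [hcalc] <;> omega
      have := hmin _ hmem
      rw [hcalc] at this
      omega
  -- per-vertex bound on the number of crossing edges incident to the interior vertex σ i
  have hcard : ∀ i ∈ Finset.Ico 1 δ,
      (2 * k - min i (k - 1) - min (δ - i) (k - 1)) ≤
      (((G.neighborFinset (σ i)).filter (fun w => δ < rho n a.1 w.1)).image
        (fun w => s(σ i, w))).card := by
    intro i hi
    rw [Finset.mem_Ico] at hi
    obtain ⟨hi1, hiδ⟩ := hi
    set N : Finset (Fin n) := G.neighborFinset (σ i) with hN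
    set W : Finset (Fin n) := N.filter (fun w => δ < rho n a.1 w.1) with hW
    set W' : Finset (Fin n) := N.filter (fun w => ¬ δ < rho n a.1 w.1) with hW'
    have himgcard : (W.image (fun w => s(σ i, w))).card = W.card := by
      apply Finset.card_image_of_injOn
      intro w1 _ w2 _ heq
      exact Sym2.congr_right.mp heq
    rw [himgcard]
    have hsplit : W.card + W'.card = N.card :=
      Finset.card_filter_add_card_filter_not (s := N)
        (fun w : Fin n => δ < rho n a.1 w.1)
    have hNc : 2 * k ≤ N.card := hdeg' (σ i)
    have hW'bound : W'.card ≤ min i (k - 1) + min (δ - i) (k - 1) := by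
      have himg : W'.image (fun w => rho n a.1 w.1) ⊆
          (Finset.Icc (i - (k - 1)) (min δ (i + (k - 1)))).erase i := by
        intro j hj
        rw [Finset.mem_image] at hj
        obtain ⟨w, hw, rfl⟩ := hj
        rw [hW', Finset.mem_filter, hN, SimpleGraph.mem_neighborFinset] at hw
        obtain ⟨hadj, hle⟩ := hw
        push_neg at hle
        have hbounds := hkey i hi1 hiδ w hadj hle
        rw [Finset.mem_erase, Finset.mem_Icc]
        refine ⟨?_, hbounds.1, le_min hle hbounds.2⟩
        intro h
        have : w = σ i := hρinj w (σ i) (by rw [h, hρσ i (by omega)])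
        exact G.ne_of_adj hadj.symm this
      have hinjim : (W'.image (fun w => rho n a.1 w.1)).card = W'.card := by
        apply Finset.card_image_of_injOn
        intro w1 _ w2 _ heq
        exact hρinj w1 w2 heq
      have hle := Finset.card_le_card himg
      rw [hinjim] at hle
      have hicc : i ∈ Finset.Icc (i - (k - 1)) (min δ (i + (k - 1))) := by
        rw [Finset.mem_Icc]
        constructor
        · omega
        · exact le_min (by omega) (by omega)
      rw [Finset.card_erase_of_mem hicc, Nat.card_Icc] at hle
      have : min δ (i + (k - 1)) + 1 - (i - (k - 1)) - 1 ≤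
          min i (k - 1) + min (δ - i) (k - 1) := by omega
      omega
    omega
  -- assemble
  refine ⟨a, b, hAdj, ?_⟩
  have hvalne : ∀ x y : Fin n, rho n a.1 x.1 ≠ rho n a.1 y.1 → x.1 ≠ y.1 := by
    intro x y h hxy
    exact h (by rw [hxy])
  set B : Finset (Sym2 (Fin n)) := (Finset.Ico 1 δ).biUnion
    (fun i => ((G.neighborFinset (σ i)).filter (fun w => δ < rho n a.1 w.1)).image
      (fun w => s(σ i, w))) with hBdef
  have hdisj : ∀ i ∈ Finset.Ico 1 δ, ∀ i' ∈ Finset.Ico 1 δ, i ≠ i' →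
      Disjoint (((G.neighborFinset (σ i)).filter (fun w => δ < rho n a.1 w.1)).image
        (fun w => s(σ i, w)))
        (((G.neighborFinset (σ i')).filter (fun w => δ < rho n a.1 w.1)).image
        (fun w => s(σ i', w))) := by
    intro i hi i' hi' hne
    rw [Finset.mem_Ico] at hi hi'
    rw [Finset.disjoint_left]
    intro e he he'
    rw [Finset.mem_image] at he he'
    obtain ⟨w, hw, rfl⟩ := he
    obtain ⟨w', hw', heq⟩ := he'
    rw [Finset.mem_filter] at hw hw'
    rw [Sym2.eq_iff] at heq
    rcases heq with ⟨h1, h2⟩ | ⟨h1, h2⟩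
    · apply hne
      have := congrArg (fun x : Fin n => rho n a.1 x.1) h1.symm
      rwa [hρσ i (by omega), hρσ i' (by omega)] at this
    · have := congrArg (fun x : Fin n => rho n a.1 x.1) h1
      rw [hρσ i' (by omega)] at this
      have := hw.2
      omega
  have hBcard : B.card = ∑ i ∈ Finset.Ico 1 δ,
      (((G.neighborFinset (σ i)).filter (fun w => δ < rho n a.1 w.1)).image
        (fun w => s(σ i, w))).card := Finset.card_biUnion hdisj
  have hsub : B ⊆ G.edgeFinset.filter
      (fun e => ∃ c d : Fin n, e = s(c, d) ∧ crossN n a.1 b.1 c.1 d.1) := by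
    intro e he
    rw [hBdef, Finset.mem_biUnion] at he
    obtain ⟨i, hi, he⟩ := he
    rw [Finset.mem_Ico] at hi
    rw [Finset.mem_image] at he
    obtain ⟨w, hw, rfl⟩ := he
    rw [Finset.mem_filter] at hw
    obtain ⟨hwN, hwδ⟩ := hw
    rw [SimpleGraph.mem_neighborFinset] at hwN
    rw [Finset.mem_filter]
    constructor
    · rw [SimpleGraph.mem_edgeFinset]
      exact hwN
    · refine ⟨σ i, w, rfl, ?_, ?_, ?_, ?_, ?_⟩
      · exact hvalne a (σ i) (by rw [hρa, hρσ i (by omega)]; omega)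
      · exact hvalne a w (by rw [hρa]; omega)
      · exact hvalne b (σ i) (by rw [hρb, hρσ i (by omega)]; omega)
      · exact hvalne b w (by rw [hρb]; omega)
      · left
        constructor
        · show 0 < rho n a.1 (σ i).1 ∧ rho n a.1 (σ i).1 < rho n a.1 b.1
          rw [hρσ i (by omega), hρb]
          omega
        · show ¬ (0 < rho n a.1 w.1 ∧ rho n a.1 w.1 < rho n a.1 b.1)
          rw [hρb]
          omega
  calc k ^ 2 - k ≤ ∑ i ∈ Finset.Ico 1 δ, (2 * k - min i (k - 1) - min (δ - i) (k - 1)) :=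
        sum_lb k δ hk hkδ
    _ ≤ ∑ i ∈ Finset.Ico 1 δ,
        (((G.neighborFinset (σ i)).filter (fun w => δ < rho n a.1 w.1)).image
          (fun w => s(σ i, w))).card := Finset.sum_le_sum hcard
    _ = B.card := hBcard.symm
    _ ≤ crossCount G a b := Finset.card_le_card hsub
end

section
/- Let k ≥ 1, let G be a graph on vertices {0,...,n−1} in convex position with minimum degree at least 2k, and suppose the edge e = {0, ℓ} with ℓ ≥ k is a shortest edge among all edges of G of length at least k. Then e crosses at least k² − 3k + 2ℓ other edges, where crossing is defined by cyclic interleaving of endpoints. -/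
private lemma sum_formula (k : ℕ) (hk : 1 ≤ k) : ∀ m : ℕ,
    (k ≤ m + 1 → 2 * (∑ i ∈ Finset.range m, max (k - (1 + i)) 1) + 3 * k = k * k + 2 * m + 2)
    ∧ (m + 1 ≤ k → 2 * (∑ i ∈ Finset.range m, max (k - (1 + i)) 1) + m * m + m = 2 * m * k) := by
  intro m
  induction m with
  | zero =>
    refine ⟨fun h => ?_, fun h => ?_⟩ <;> simp <;> nlinarith
  | succ m ih =>
    obtain ⟨ih1, ih2⟩ := ih
    rw [Finset.sum_range_succ]
    constructor
    · intro h
      rcases le_or_gt k (m + 1) with h1 | h1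
      · have ht : max (k - (1 + m)) 1 = 1 := by omega
        have := ih1 h1
        rw [ht]; nlinarith
      · have hk2 : k = m + 2 := by omega
        have := ih2 (by omega)
        have ht : max (k - (1 + m)) 1 = 1 := by omega
        rw [ht]; nlinarith
    · intro h
      have := ih2 (by omega)
      have ht : max (k - (1 + m)) 1 = k - (1 + m) := by omega
      have ht2 : (k - (1 + m)) + (1 + m) = k := by omega
      rw [ht]; nlinarith

/-- Let `G` be a graph on `n` vertices in convex position with minimum degree at least `2k`,
and suppose the edge `e = {0, ℓ}` with `k ≤ ℓ ≤ n − ℓ` (so `e` has length `ℓ ≥ k`) is a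
shortest edge among all edges of length at least `k`. Then `e` crosses at least
`k² − 3k + 2ℓ` other edges. -/
theorem stmt5 (k n : ℕ) (hk : 1 ≤ k) (hn : 2 * k + 1 ≤ n)
    (G : SimpleGraph (Fin n)) [DecidableRel G.Adj]
    (hdeg : ∀ v : Fin n, 2 * k ≤ G.degree v)
    (z ℓ : Fin n) (hz : z.1 = 0)
    (hadj : G.Adj z ℓ)
    (hhalf : ℓ.1 ≤ n - ℓ.1) (hkℓ : k ≤ ℓ.1)
    (hshort : ∀ i j : Fin n, G.Adj i j → k ≤ cdist n i.1 j.1 → ℓ.1 ≤ cdist n i.1 j.1) :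
    k ^ 2 + 2 * ℓ.1 - 3 * k ≤ crossCount G z ℓ := by
  classical
  set L := ℓ.1 with hLdef
  clear_value L
  have hLn : L < n := hLdef ▸ ℓ.2
  have hL2 : 2 * L ≤ n := by omega
  set S : Finset (Fin n) := Finset.univ.filter (fun i => 0 < i.1 ∧ i.1 < L) with hS
  set A : Fin n → Finset (Fin n) :=
    fun i => (G.neighborFinset i).filter (fun j => L < j.1) with hA
  -- membership characterizations
  have hmemS : ∀ i : Fin n, i ∈ S ↔ 0 < i.1 ∧ i.1 < L := by
    intro i; simp [hS]
  have hmemA : ∀ i j : Fin n, j ∈ A i ↔ G.Adj i j ∧ L < j.1 := by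
    intro i j; simp [hA]
  -- Step 1 : the crossing edges dominate the disjoint union of the A i, i ∈ S
  have step1 : ∑ i ∈ S, (A i).card ≤ crossCount G z ℓ := by
    have hdisj : ∀ i1 ∈ S, ∀ i2 ∈ S, i1 ≠ i2 →
        Disjoint ((A i1).image (fun j => s(i1, j))) ((A i2).image (fun j => s(i2, j))) := by
      intro i1 h1 i2 h2 hne
      rw [Finset.disjoint_left]
      intro e he1 he2
      simp only [Finset.mem_image] at he1 he2
      obtain ⟨a, ha, rfl⟩ := he1
      obtain ⟨b, hb, heq⟩ := he2
      rw [Sym2.eq_iff] at heq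
      rcases heq with ⟨h, h'⟩ | ⟨h, h'⟩
      · exact hne h.symm
      · have := ((hmemA i2 b).1 hb).2
        have := ((hmemS i1).1 h1).2
        rw [← h'] at this
        omega
    have hcard : (S.biUnion (fun i => (A i).image (fun j => s(i, j)))).card
        = ∑ i ∈ S, (A i).card := by
      rw [Finset.card_biUnion hdisj]
      refine Finset.sum_congr rfl fun i hi => ?_
      rw [Finset.card_image_of_injOn]
      intro a ha b hb hab
      rw [Sym2.eq_iff] at hab
      rcases hab with ⟨h, h'⟩ | ⟨h, h'⟩
      · exact h'
      · exact h'.trans h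
    rw [crossCount, ← hcard]
    apply Finset.card_le_card
    intro e he
    simp only [Finset.mem_biUnion, Finset.mem_image] at he
    obtain ⟨i, hi, j, hj, rfl⟩ := he
    obtain ⟨hi0, hiL⟩ := (hmemS i).1 hi
    obtain ⟨hadj', hjL⟩ := (hmemA i j).1 hj
    have hjn : j.1 < n := j.2
    have hmod : ∀ x : ℕ, x < n → (x + n - 0) % n = x := by
      intro x hx
      rw [Nat.sub_zero, Nat.add_mod_right, Nat.mod_eq_of_lt hx]
    rw [Finset.mem_filter]
    refine ⟨SimpleGraph.mem_edgeFinset.2 hadj', i, j, rfl, ?_⟩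
    rw [hz, ← hLdef]
    refine ⟨by omega, by omega, by omega, by omega, Or.inl ⟨⟨?_, ?_⟩, ?_⟩⟩
    · rw [hmod i.1 i.2]; omega
    · rw [hmod i.1 i.2, hmod L hLn]; omega
    · intro hc
      obtain ⟨hc1, hc2⟩ := hc
      rw [hmod j.1 j.2, hmod L hLn] at hc2
      omega
  -- Step 2 : per-vertex lower bound on crossing neighbours
  have step2 : ∀ i ∈ S, max (k - i.1) 1 + max (k - (L - i.1)) 1 ≤ (A i).card := by
    intro i hi
    obtain ⟨hi0, hiL⟩ := (hmemS i).1 hi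
    set B : Finset (Fin n) := (G.neighborFinset i).filter (fun j => ¬ L < j.1) with hB
    have hAB : (A i).card + B.card = G.degree i := by
      rw [hA, hB, SimpleGraph.degree]
      exact Finset.card_filter_add_card_filter_not _
    have hBsub : B.image Fin.val ⊆ (Finset.Icc (i.1 - (k - 1)) (min L (i.1 + (k - 1)))).erase i.1 := by
      intro m hm
      simp only [Finset.mem_image] at hm
      obtain ⟨j, hj, rfl⟩ := hm
      simp only [hB, Finset.mem_filter, SimpleGraph.mem_neighborFinset, not_lt] at hj
      obtain ⟨hadj', hjL⟩ := hj
      have hne : j.1 ≠ i.1 := fun h => (G.ne_of_adj hadj') (Fin.ext h.symm)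
      have hdist : max i.1 j.1 - min i.1 j.1 ≤ k - 1 := by
        by_contra hcon
        push_neg at hcon
        have hcd : cdist n i.1 j.1 = max i.1 j.1 - min i.1 j.1 := by
          rw [cdist]; omega
        have hle := hshort i j hadj' (by rw [hcd]; omega)
        rw [hcd] at hle
        omega
      rw [Finset.mem_erase, Finset.mem_Icc]
      omega
    have hBcard : B.card ≤ min i.1 (k - 1) + min (L - i.1) (k - 1) := by
      have h1 : B.card = (B.image Fin.val).card :=
        (Finset.card_image_of_injective _ Fin.val_injective).symm
      have h2 := Finset.card_le_card hBsub
      have h3 : i.1 ∈ Finset.Icc (i.1 - (k - 1)) (min L (i.1 + (k - 1))) := by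
        rw [Finset.mem_Icc]; omega
      rw [Finset.card_erase_of_mem h3, Nat.card_Icc] at h2
      omega
    have hdegi := hdeg i
    omega
  -- Step 3 : identify the sum over S with a sum over naturals
  have step3 : ∑ i ∈ S, (max (k - i.1) 1 + max (k - (L - i.1)) 1)
      = ∑ m ∈ Finset.Ico 1 L, (max (k - m) 1 + max (k - (L - m)) 1) := by
    refine Finset.sum_bij (fun i _ => i.1) ?_ ?_ ?_ ?_
    · intro a ha
      obtain ⟨h1, h2⟩ := (hmemS a).1 ha
      rw [Finset.mem_Ico]; beta_reduce; omega
    · intro a _ b _ h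
      exact Fin.ext h
    · intro b hb
      rw [Finset.mem_Ico] at hb
      exact ⟨⟨b, by omega⟩, (hmemS _).2 hb, rfl⟩
    · intro a _; rfl
  have step4 : ∑ m ∈ Finset.Ico 1 L, max (k - (L - m)) 1 = ∑ m ∈ Finset.Ico 1 L, max (k - m) 1 := by
    refine Finset.sum_nbij' (fun m => L - m) (fun m => L - m) ?_ ?_ ?_ ?_ ?_
    · intro a ha; rw [Finset.mem_Ico] at ha ⊢; beta_reduce; omega
    · intro a ha; rw [Finset.mem_Ico] at ha ⊢; beta_reduce; omega
    · intro a ha; rw [Finset.mem_Ico] at ha; show L - (L - a) = a; omega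
    · intro a ha; rw [Finset.mem_Ico] at ha; show L - (L - a) = a; omega
    · intro a ha; rfl
  have step5 : ∑ m ∈ Finset.Ico 1 L, max (k - m) 1
      = ∑ i ∈ Finset.range (L - 1), max (k - (1 + i)) 1 := by
    rw [Finset.sum_Ico_eq_sum_range]
  have hform := (sum_formula k hk (L - 1)).1 (by omega)
  have hsum_le : ∑ i ∈ S, (max (k - i.1) 1 + max (k - (L - i.1)) 1) ≤ ∑ i ∈ S, (A i).card :=
    Finset.sum_le_sum step2
  rw [step3, Finset.sum_add_distrib, step4, step5] at hsum_le
  have hp : k ^ 2 = k * k := sq k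
  omega
end

section
/- Let k ≥ 2 and let G be a graph whose vertex set is A ∪ B, such that the induced subgraphs G[A] and G[B] are both k-connected, |A ∩ B| = s where 2 ≤ s ≤ k, and G contains a matching of size k − s between A \ B and B \ A (i.e., k − s pairwise disjoint edges, each with one endpoint in A \ B and one in B \ A). Then G is k-connected. -/
open SimpleGraph

/-- Transfer connectivity from an induced subgraph of an induced subgraph. -/
lemma induce_induce_connected {V : Type*} (G : SimpleGraph V) (T : Set V) (P : V → Prop)
    (h : ((G.induce T).induce {x : T | P ↑x}).Connected) :
    (G.induce {v : V | v ∈ T ∧ P v}).Connected := by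
  have e : (G.induce T).induce {x : T | P ↑x} ≃g G.induce {v : V | v ∈ T ∧ P v} := by
    refine ⟨⟨fun x => ⟨(x.1 : V), x.1.2, x.2⟩, fun v => ⟨⟨v.1, v.2.1⟩, v.2.2⟩, ?_, ?_⟩, ?_⟩
    · intro x; rfl
    · intro v; rfl
    · intro a b; rfl
  exact e.connected_iff.mp h

/-- Gluing lemma: if `V = A ∪ B`, the induced subgraphs `G[A]` and `G[B]` are
`k`-connected, `|A ∩ B| = s` with `2 ≤ s ≤ k`, and there is a matching of size
`k − s` between `A \ B` and `B \ A`, then `G` is `k`-connected. -/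
theorem stmt7 {V : Type*} [Fintype V] [DecidableEq V] (G : SimpleGraph V)
    (k s : ℕ) (hk : 2 ≤ k) (A B : Finset V)
    (hcover : A ∪ B = Finset.univ)
    (hA : KConnected (G.induce (A : Set V)) k)
    (hB : KConnected (G.induce (B : Set V)) k)
    (hs2 : 2 ≤ s) (hsk : s ≤ k) (hcard : (A ∩ B).card = s)
    (M : Finset (V × V)) (hMcard : M.card = k - s)
    (hMends : ∀ p ∈ M, p.1 ∈ A \ B ∧ p.2 ∈ B \ A ∧ G.Adj p.1 p.2)
    (hMdisj : ∀ p ∈ M, ∀ q ∈ M, p ≠ q → p.1 ≠ q.1 ∧ p.2 ≠ q.2) :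
    KConnected G k := by
  constructor
  · exact lt_of_lt_of_le hA.1 (Fintype.card_le_of_injective _ Subtype.val_injective)
  intro S hS
  -- connectivity of the two pieces
  have key : ∀ C : Finset V, KConnected (G.induce (C : Set V)) k →
      (G.induce {v : V | v ∈ (C : Set V) ∧ v ∉ S}).Connected := by
    intro C hC
    apply induce_induce_connected G (C : Set V) (fun v => v ∉ S)
    have hcard' : (Finset.univ.filter (fun x : ↥(C : Set V) => (x : V) ∈ S)).card ≤ S.card := by
      refine Finset.card_le_card_of_injOn (fun x => (x : V))
        (fun a ha => by simpa using (Finset.mem_filter.mp ha).2)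
        (fun a _ b _ h => Subtype.ext h)
    have h := hC.2 (Finset.univ.filter (fun x : ↥(C : Set V) => (x : V) ∈ S))
      (lt_of_le_of_lt hcard' hS)
    have hset : {v : ↥(C : Set V) | v ∉ Finset.univ.filter (fun x : ↥(C : Set V) => (x : V) ∈ S)}
        = {x : ↥(C : Set V) | ((x : V) ∉ S)} := by
      ext x; simp
    rwa [hset] at h
  have hA' := key A hA
  have hB' := key B hB
  have hsets : {v : V | v ∉ S} =
      {v : V | v ∈ (A : Set V) ∧ v ∉ S} ∪ {v : V | v ∈ (B : Set V) ∧ v ∉ S} := by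
    ext v
    have hv : v ∈ A ∨ v ∈ B := by
      have := Finset.mem_univ v; rw [← hcover] at this
      exact Finset.mem_union.mp this
    simp only [Set.mem_setOf_eq, Set.mem_union, Finset.coe_mem, Finset.mem_coe]
    tauto
  rw [hsets]
  by_cases hex : ∃ v ∈ A ∩ B, v ∉ S
  · obtain ⟨v, hv, hvS⟩ := hex
    rw [Finset.mem_inter] at hv
    exact induce_union_connected hA'.preconnected hB'.preconnected ⟨v, ⟨hv.1, hvS⟩, ⟨hv.2, hvS⟩⟩
  · push_neg at hex
    by_cases hedge : ∃ p ∈ M, p.1 ∉ S ∧ p.2 ∉ S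
    · obtain ⟨p, hp, h1, h2⟩ := hedge
      obtain ⟨hp1, hp2, hadj⟩ := hMends p hp
      exact connected_induce_union hA'.preconnected hB'.preconnected
        ⟨(Finset.mem_sdiff.mp hp1).1, h1⟩ ⟨(Finset.mem_sdiff.mp hp2).1, h2⟩ hadj
    · exfalso
      push_neg at hedge
      set f : V × V → V := fun p => if p.1 ∈ S then p.1 else p.2 with hf
      have hfS : ∀ p ∈ M, f p ∈ S := by
        intro p hp
        by_cases h1 : p.1 ∈ S
        · simp [hf, h1]
        · simp [hf, h1, hedge p hp h1]
      have hfout : ∀ p ∈ M, f p ∉ A ∩ B := by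
        intro p hp
        obtain ⟨hp1, hp2, -⟩ := hMends p hp
        by_cases h1 : p.1 ∈ S
        · simp only [hf, if_pos h1]
          intro h; exact (Finset.mem_sdiff.mp hp1).2 (Finset.mem_inter.mp h).2
        · simp only [hf, if_neg h1]
          intro h; exact (Finset.mem_sdiff.mp hp2).2 (Finset.mem_inter.mp h).1
      have hinj : Set.InjOn f ↑M := by
        intro p hp q hq hpq
        by_contra hne
        obtain ⟨h1, h2⟩ := hMdisj p hp q hq hne
        obtain ⟨hp1, hp2, -⟩ := hMends p hp
        obtain ⟨hq1, hq2, -⟩ := hMends q hq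
        have hAB : ∀ x ∈ A \ B, ∀ y ∈ B \ A, x ≠ y := by
          intro x hx y hy h
          subst h
          exact (Finset.mem_sdiff.mp hx).2 (Finset.mem_sdiff.mp hy).1
        simp only [hf] at hpq
        by_cases c1 : p.1 ∈ S <;> by_cases c2 : q.1 ∈ S <;>
          simp only [if_pos, if_neg, c1, c2, if_true, if_false] at hpq
        · exact h1 hpq
        · exact hAB p.1 hp1 q.2 hq2 hpq
        · exact hAB q.1 hq1 p.2 hp2 hpq.symm
        · exact h2 hpq
      have hI : (A ∩ B) ∪ M.image f ⊆ S := by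
        intro x hx
        rcases Finset.mem_union.mp hx with h | h
        · by_contra hxS; exact hxS (hex x h)
        · obtain ⟨p, hp, rfl⟩ := Finset.mem_image.mp h
          exact hfS p hp
      have hdisj : Disjoint (A ∩ B) (M.image f) := by
        rw [Finset.disjoint_right]
        intro x hx
        obtain ⟨p, hp, rfl⟩ := Finset.mem_image.mp hx
        exact hfout p hp
      have hcount : k ≤ S.card := by
        have h1 : ((A ∩ B) ∪ M.image f).card = s + (k - s) := by
          rw [Finset.card_union_of_disjoint hdisj, hcard,
            Finset.card_image_of_injOn hinj, hMcard]
        have h2 := Finset.card_le_card hI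
        omega
      omega
end

section
/- Subdividing an edge xy of a 3-connected graph G by a new vertex w and adding an edge wv to some vertex v ∉ {x, y} of G produces a 3-connected graph (the (1,2) BG-operation preserves 3-connectivity). -/
/-- The (1,2) BG-operation: subdivide the edge `xy` of `G` by a new vertex `w`
(the vertex `Sum.inr ()`) and add the edge `wv`. -/
def bg12 {V : Type*} (G : SimpleGraph V) (x y v : V) : SimpleGraph (V ⊕ Unit) :=
  SimpleGraph.fromRel fun p q =>
    match p, q with
    | Sum.inl a, Sum.inl b => G.Adj a b ∧ ¬ ((a = x ∧ b = y) ∨ (a = y ∧ b = x))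
    | Sum.inl a, Sum.inr _ => a = x ∨ a = y ∨ a = v
    | _, _ => False

/-- Push a walk forward, vertexwise, to reachability in another graph. -/
lemma reachable_of_walk {α β : Type*} {G1 : SimpleGraph α} {H1 : SimpleGraph β} (f : α → β)
    (hf : ∀ a b, G1.Adj a b → H1.Reachable (f a) (f b)) {a b : α} (w : G1.Walk a b) :
    H1.Reachable (f a) (f b) := by
  induction w with
  | nil => exact SimpleGraph.Reachable.refl _
  | cons h p ih => exact (hf _ _ h).trans ih

lemma reachable_of_reachable {α β : Type*} {G1 : SimpleGraph α} {H1 : SimpleGraph β} (f : α → β)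
    (hf : ∀ a b, G1.Adj a b → H1.Reachable (f a) (f b)) {a b : α} (w : G1.Reachable a b) :
    H1.Reachable (f a) (f b) :=
  w.elim (reachable_of_walk f hf)

/-- Deleting the edge `xy` and at most one vertex from a 3-connected graph leaves a
connected graph. -/
lemma delete_edge_conn {V : Type*} [Fintype V] [DecidableEq V] (G : SimpleGraph V)
    (x y : V) (h3 : KConnected G 3) (hxy : G.Adj x y) (z : Finset V) (hz : z.card ≤ 1) :
    ((G.deleteEdges {s(x, y)}).induce {u : V | u ∉ z}).Connected := by
  classical
  set D := G.deleteEdges {s(x, y)} with hD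
  have hcardV : 3 < Fintype.card V := h3.1
  have hconn : ∀ t : Finset V, t.card ≤ 2 → (G.induce {u : V | u ∉ t}).Connected := by
    intro t ht; exact h3.2 t (by omega)
  have hadjD : ∀ a b : V, G.Adj a b → s(a, b) ≠ s(x, y) → D.Adj a b := by
    intro a b hab hne
    rw [hD, SimpleGraph.deleteEdges_adj]
    exact ⟨hab, by simpa using hne⟩
  -- Reachability of x and y in D minus z, when both survive
  have Rxy : ∀ (hx : x ∉ z) (hy : y ∉ z),
      (D.induce {u : V | u ∉ z}).Reachable ⟨x, hx⟩ ⟨y, hy⟩ := by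
    intro hx hy
    by_cases hnb : ∃ a : V, a ∉ z ∧ D.Adj x a
    · obtain ⟨a, haz, hadj⟩ := hnb
      have hax : a ≠ x := hadj.ne'
      have hay : a ≠ y := by
        rintro rfl
        rw [hD, SimpleGraph.deleteEdges_adj] at hadj
        exact hadj.2 (by simp)
      -- connect a to y avoiding z ∪ {x}
      have ht : (insert x z).card ≤ 2 := le_trans (Finset.card_insert_le _ _) (by omega)
      have hconn' := hconn (insert x z) ht
      have hamem : a ∈ {u : V | u ∉ insert x z} := by
        simp only [Set.mem_setOf_eq, Finset.mem_insert, not_or]; exact ⟨hax, haz⟩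
      have hymem : y ∈ {u : V | u ∉ insert x z} := by
        simp only [Set.mem_setOf_eq, Finset.mem_insert, not_or]; exact ⟨fun h => hxy.ne h.symm, hy⟩
      have hreach := hconn'.preconnected ⟨a, hamem⟩ ⟨y, hymem⟩
      have key : (D.induce {u : V | u ∉ z}).Reachable ⟨a, haz⟩ ⟨y, hy⟩ := by
        refine reachable_of_reachable
          (fun (p : {u : V | u ∉ insert x z}) =>
            (⟨p.1, fun h => p.2 (Finset.mem_insert_of_mem h)⟩ : {u : V | u ∉ z})) ?_ hreach
        intro p q hpq
        have hGadj : G.Adj p.1 q.1 := hpq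
        have hpx : p.1 ≠ x := fun h => p.2 (by simp [h])
        have hqx : q.1 ≠ x := fun h => q.2 (by simp [h])
        refine SimpleGraph.Adj.reachable ?_
        show D.Adj p.1 q.1
        refine hadjD _ _ hGadj ?_
        intro heq
        rw [Sym2.eq_iff] at heq
        rcases heq with ⟨h1, h2⟩ | ⟨h1, h2⟩
        · exact hpx h1
        · exact hqx h2
      have h1 : (D.induce {u : V | u ∉ z}).Reachable ⟨x, hx⟩ ⟨a, haz⟩ :=
        SimpleGraph.Adj.reachable (by exact hadj)
      exact h1.trans key
    · exfalso
      push_neg at hnb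
      -- x has no D-neighbour outside z; find u ∉ z ∪ {x, y} and contradict 3-connectivity
      have hbig : ∃ u : V, u ∉ insert x (insert y z) := by
        by_contra h
        push_neg at h
        have : Finset.univ ⊆ insert x (insert y z) := fun u _ => h u
        have := Finset.card_le_card this
        have h1 : (insert x (insert y z)).card ≤ 3 :=
          le_trans (Finset.card_insert_le _ _)
            (by have := Finset.card_insert_le y z; omega)
        simp only [Finset.card_univ] at this
        omega
      obtain ⟨u, hu⟩ := hbig
      simp only [Finset.mem_insert, not_or] at hu
      obtain ⟨hux, huy, huz⟩ := hu
      have ht : (insert y z).card ≤ 2 := le_trans (Finset.card_insert_le _ _) (by omega)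
      have hconn' := hconn (insert y z) ht
      have hxmem : x ∈ {u : V | u ∉ insert y z} := by
        simp only [Set.mem_setOf_eq, Finset.mem_insert, not_or]; exact ⟨hxy.ne, hx⟩
      have humem : u ∈ {w : V | w ∉ insert y z} := by
        simp only [Set.mem_setOf_eq, Finset.mem_insert, not_or]; exact ⟨huy, huz⟩
      obtain ⟨w⟩ := hconn'.preconnected ⟨x, hxmem⟩ ⟨u, humem⟩
      cases w with
      | nil => exact hux rfl
      | cons h p =>
        rename_i b
        have hGadj : G.Adj x b.1 := h
        have hby : b.1 ≠ y := fun hb => b.2 (by simp [hb])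
        have hbz : b.1 ∉ z := fun hb => b.2 (by simp [hb])
        refine hnb b.1 hbz (hadjD _ _ hGadj ?_)
        intro heq
        rw [Sym2.eq_iff] at heq
        rcases heq with ⟨h1, h2⟩ | ⟨h1, h2⟩
        · exact hby h2
        · exact hxy.ne h1
  -- now the general connectivity
  have hne : ∃ u : V, u ∉ z := by
    by_contra h
    push_neg at h
    have : Finset.univ ⊆ z := fun u _ => h u
    have := Finset.card_le_card this
    simp only [Finset.card_univ] at this
    omega
  obtain ⟨u0, hu0⟩ := hne
  rw [SimpleGraph.connected_iff_exists_forall_reachable]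
  refine ⟨⟨u0, hu0⟩, fun p => ?_⟩
  have hreach := (hconn z (by omega)).preconnected ⟨u0, hu0⟩ p
  refine reachable_of_reachable id ?_ hreach
  intro a b hab
  have hGadj : G.Adj a.1 b.1 := hab
  by_cases heq : s(a.1, b.1) = s(x, y)
  · rw [Sym2.eq_iff] at heq
    rcases heq with ⟨h1, h2⟩ | ⟨h1, h2⟩
    · have ha : a = ⟨x, h1 ▸ a.2⟩ := Subtype.ext h1
      have hb : b = ⟨y, h2 ▸ b.2⟩ := Subtype.ext h2
      rw [ha, hb]; exact Rxy _ _
    · have ha : a = ⟨y, h1 ▸ a.2⟩ := Subtype.ext h1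
      have hb : b = ⟨x, h2 ▸ b.2⟩ := Subtype.ext h2
      rw [ha, hb]; exact (Rxy _ _).symm
  · exact SimpleGraph.Adj.reachable (hadjD _ _ hGadj heq)

/-- Subdividing an edge `xy` of a 3-connected graph by a new vertex `w` and adding an
edge from `w` to any vertex `v ∉ {x, y}` produces a 3-connected graph. -/
theorem stmt12 {V : Type*} [Fintype V] [DecidableEq V] (G : SimpleGraph V)
    (x y v : V) (h3 : KConnected G 3) (hxy : G.Adj x y) (hvx : v ≠ x) (hvy : v ≠ y) :
    KConnected (bg12 G x y v) 3 := by
  classical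
  set H := bg12 G x y v with hHdef
  have hcardV : 3 < Fintype.card V := h3.1
  have hadjH : ∀ a b : V, G.Adj a b → s(a, b) ≠ s(x, y) → H.Adj (Sum.inl a) (Sum.inl b) := by
    intro a b hab hne
    rw [hHdef, bg12, SimpleGraph.fromRel_adj]
    refine ⟨by simp [hab.ne], Or.inl ⟨hab, ?_⟩⟩
    simp only [ne_eq, Sym2.eq_iff, not_or] at hne
    tauto
  have hadjW : ∀ a : V, (a = x ∨ a = y ∨ a = v) → H.Adj (Sum.inl a) (Sum.inr ()) := by
    intro a ha
    rw [hHdef, bg12, SimpleGraph.fromRel_adj]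
    exact ⟨by simp, Or.inl ha⟩
  constructor
  · simp only [Fintype.card_sum, Fintype.card_unit]; omega
  intro s hs
  by_cases hw : Sum.inr () ∈ s
  · -- the new vertex is deleted : reduces to `delete_edge_conn`
    set z : Finset V := s.preimage Sum.inl Sum.inl_injective.injOn with hzdef
    have hzmem : ∀ u : V, u ∈ z ↔ Sum.inl u ∈ s := fun u => Finset.mem_preimage
    have hz : z.card ≤ 1 := by
      have hinj : Set.InjOn (fun u : V => (Sum.inl u : V ⊕ Unit)) z := fun a _ b _ h =>
        Sum.inl_injective h
      have hmaps : ∀ u ∈ z, (Sum.inl u : V ⊕ Unit) ∈ s.erase (Sum.inr ()) := by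
        intro u hu
        exact Finset.mem_erase.mpr ⟨by simp, (hzmem u).mp hu⟩
      have := Finset.card_le_card_of_injOn _ hmaps hinj
      have hcs : (s.erase (Sum.inr ())).card = s.card - 1 := Finset.card_erase_of_mem hw
      omega
    have hC := delete_edge_conn G x y h3 hxy z hz
    rw [SimpleGraph.connected_iff_exists_forall_reachable] at hC ⊢
    obtain ⟨p0, hp0⟩ := hC
    have hmap : ∀ u : {u : V | u ∉ z}, Sum.inl u.1 ∉ s := by
      intro u h
      exact u.2 ((hzmem u.1).mpr h)
    have key : ∀ a b : {u : V | u ∉ z}, (G.deleteEdges {s(x, y)}).Adj a.1 b.1 →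
        (H.induce {p : V ⊕ Unit | p ∉ s}).Reachable ⟨Sum.inl a.1, hmap a⟩ ⟨Sum.inl b.1, hmap b⟩ := by
      intro a b hab
      rw [SimpleGraph.deleteEdges_adj] at hab
      refine SimpleGraph.Adj.reachable ?_
      show H.Adj (Sum.inl a.1) (Sum.inl b.1)
      exact hadjH _ _ hab.1 (by simpa using hab.2)
    refine ⟨⟨Sum.inl p0.1, hmap p0⟩, fun q => ?_⟩
    -- q is of the form inl u with u ∉ z
    obtain ⟨q, hq⟩ := q
    match q with
    | Sum.inr () => exact absurd hw hq
    | Sum.inl u =>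
      have huz : u ∉ z := fun h => hq ((hzmem u).mp h)
      have := hp0 ⟨u, huz⟩
      have hre := reachable_of_reachable
        (fun (a : {u : V | u ∉ z}) =>
          (⟨Sum.inl a.1, hmap a⟩ : {p : V ⊕ Unit | p ∉ s})) key this
      exact hre
  · -- the new vertex survives
    set z : Finset V := s.preimage Sum.inl Sum.inl_injective.injOn with hzdef
    have hzmem : ∀ u : V, u ∈ z ↔ Sum.inl u ∈ s := fun u => Finset.mem_preimage
    have hz : z.card ≤ 2 := by
      have hinj : Set.InjOn (fun u : V => (Sum.inl u : V ⊕ Unit)) z := fun a _ b _ h =>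
        Sum.inl_injective h
      have hmaps : ∀ u ∈ z, (Sum.inl u : V ⊕ Unit) ∈ s := fun u hu => (hzmem u).mp hu
      have := Finset.card_le_card_of_injOn _ hmaps hinj
      omega
    have hmap : ∀ u : {u : V | u ∉ z}, Sum.inl u.1 ∉ s := by
      intro u h
      exact u.2 ((hzmem u.1).mpr h)
    set S : Set (V ⊕ Unit) := {p : V ⊕ Unit | p ∉ s} with hSdef
    have hwS : Sum.inr () ∈ S := hw
    -- a surviving neighbour of the new vertex
    have htv : ∃ t : V, t ∉ z ∧ (t = x ∨ t = y ∨ t = v) := by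
      by_contra h
      push_neg at h
      have hx : x ∈ z := by by_contra hc; exact (h x hc).1 rfl
      have hy : y ∈ z := by by_contra hc; exact (h y hc).2.1 rfl
      have hv : v ∈ z := by by_contra hc; exact (h v hc).2.2 rfl
      have hsub : ({x, y, v} : Finset V) ⊆ z := by
        intro u hu
        simp only [Finset.mem_insert, Finset.mem_singleton] at hu
        rcases hu with rfl | rfl | rfl <;> assumption
      have hcard3 : ({x, y, v} : Finset V).card = 3 := by
        rw [Finset.card_insert_of_notMem (by simp [hxy.ne, hvx.symm]),
          Finset.card_insert_of_notMem (by simp [hvy.symm])]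
        simp
      have := Finset.card_le_card hsub
      omega
    obtain ⟨t, htz, ht⟩ := htv
    have htS : Sum.inl t ∈ S := hmap ⟨t, htz⟩
    have hadjtw : (H.induce S).Adj ⟨Sum.inl t, htS⟩ ⟨Sum.inr (), hwS⟩ := hadjW t ht
    -- key transfer lemma
    have key : ∀ a b : {u : V | u ∉ z}, G.Adj a.1 b.1 →
        (H.induce S).Reachable ⟨Sum.inl a.1, hmap a⟩ ⟨Sum.inl b.1, hmap b⟩ := by
      intro a b hab
      by_cases heq : s(a.1, b.1) = s(x, y)
      · rw [Sym2.eq_iff] at heq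
        rcases heq with ⟨h1, h2⟩ | ⟨h1, h2⟩
        · have r1 : (H.induce S).Adj ⟨Sum.inl a.1, hmap a⟩ ⟨Sum.inr (), hwS⟩ :=
            hadjW a.1 (Or.inl h1)
          have r2 : (H.induce S).Adj ⟨Sum.inr (), hwS⟩ ⟨Sum.inl b.1, hmap b⟩ :=
            (hadjW b.1 (Or.inr (Or.inl h2))).symm
          exact r1.reachable.trans r2.reachable
        · have r1 : (H.induce S).Adj ⟨Sum.inl a.1, hmap a⟩ ⟨Sum.inr (), hwS⟩ :=
            hadjW a.1 (Or.inr (Or.inl h1))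
          have r2 : (H.induce S).Adj ⟨Sum.inr (), hwS⟩ ⟨Sum.inl b.1, hmap b⟩ :=
            (hadjW b.1 (Or.inl h2)).symm
          exact r1.reachable.trans r2.reachable
      · exact SimpleGraph.Adj.reachable (hadjH _ _ hab heq)
    have reach : ∀ a : {u : V | u ∉ z},
        (H.induce S).Reachable ⟨Sum.inl a.1, hmap a⟩ ⟨Sum.inr (), hwS⟩ := by
      intro a
      have hconn := h3.2 z (by omega)
      have hre := hconn.preconnected a ⟨t, htz⟩
      have := reachable_of_reachable
        (fun (a : {u : V | u ∉ z}) => (⟨Sum.inl a.1, hmap a⟩ : S)) key hre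
      exact this.trans hadjtw.reachable
    rw [SimpleGraph.connected_iff_exists_forall_reachable]
    refine ⟨⟨Sum.inr (), hwS⟩, fun q => ?_⟩
    obtain ⟨q, hq⟩ := q
    match q with
    | Sum.inr () => exact SimpleGraph.Reachable.refl _
    | Sum.inl u =>
      have huz : u ∉ z := fun h => hq ((hzmem u).mp h)
      exact (reach ⟨u, huz⟩).symm
end

section
/- Let G be a 3-connected graph with two disjoint edges xy and vw. Subdivide xy by a new vertex a, subdivide vw by a new vertex b, and add the edge ab. The resulting graph is 3-connected (the (2,3) BG-operation preserves 3-connectivity). -/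
def bg23 {V : Type*} (G : SimpleGraph V) (x y v w : V) : SimpleGraph (V ⊕ Bool) :=
  SimpleGraph.fromRel fun p q =>
    match p, q with
    | Sum.inl u, Sum.inl u' =>
        G.Adj u u' ∧ ¬ ((u = x ∧ u' = y) ∨ (u = y ∧ u' = x)) ∧
          ¬ ((u = v ∧ u' = w) ∨ (u = w ∧ u' = v))
    | Sum.inl u, Sum.inr c => if c then u = x ∨ u = y else u = v ∨ u = w
    | Sum.inr c, Sum.inr c' => c ≠ c'
    | _, _ => False

section helpers
variable {V : Type*} (G : SimpleGraph V) (x y v w : V)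

lemma bg23_adj_inl_inl {u u' : V} (h : G.Adj u u')
    (h1 : ¬((u = x ∧ u' = y) ∨ (u = y ∧ u' = x)))
    (h2 : ¬((u = v ∧ u' = w) ∨ (u = w ∧ u' = v))) :
    (bg23 G x y v w).Adj (Sum.inl u) (Sum.inl u') := by
  rw [bg23, SimpleGraph.fromRel_adj]
  exact ⟨by simpa using h.ne, Or.inl ⟨h, h1, h2⟩⟩

lemma bg23_adj_inl_a {u : V} (h : u = x ∨ u = y) :
    (bg23 G x y v w).Adj (Sum.inl u) (Sum.inr true) := by
  rw [bg23, SimpleGraph.fromRel_adj]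
  exact ⟨by simp, Or.inl (by simpa using h)⟩

lemma bg23_adj_inl_b {u : V} (h : u = v ∨ u = w) :
    (bg23 G x y v w).Adj (Sum.inl u) (Sum.inr false) := by
  rw [bg23, SimpleGraph.fromRel_adj]
  exact ⟨by simp, Or.inl (by simpa using h)⟩

lemma bg23_adj_ab : (bg23 G x y v w).Adj (Sum.inr true) (Sum.inr false) := by
  rw [bg23, SimpleGraph.fromRel_adj]
  exact ⟨by simp, Or.inl (by simp)⟩

lemma reach_of_adj {W : Type*} (H : SimpleGraph W) {B : Set W} {p q : W}
    (hp : p ∈ B) (hq : q ∈ B) (h : H.Adj p q) :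
    (H.induce B).Reachable ⟨p, hp⟩ ⟨q, hq⟩ :=
  SimpleGraph.Adj.reachable (by simpa using h)

lemma exists_adj_of_reachable {W : Type*} {H : SimpleGraph W} {p q : W}
    (h : H.Reachable p q) (hne : p ≠ q) : ∃ r, H.Adj p r := by
  obtain ⟨wlk⟩ := h
  cases wlk with
  | nil => exact absurd rfl hne
  | cons h _ => exact ⟨_, h⟩

/-- lifting reachability from an induced subgraph of `G` to an induced subgraph of `H`. -/
lemma lift_reach {W : Type*} (H : SimpleGraph W) (f : V → W)
    (A : Set V) (B : Set W) (hAB : ∀ u, u ∈ A → f u ∈ B)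
    (h : ∀ u u' (hu : u ∈ A) (hu' : u' ∈ A), G.Adj u u' →
      (H.induce B).Reachable ⟨f u, hAB u hu⟩ ⟨f u', hAB u' hu'⟩) :
    ∀ (p q : A), (G.induce A).Reachable p q →
      (H.induce B).Reachable ⟨f p, hAB _ p.2⟩ ⟨f q, hAB _ q.2⟩ := by
  intro p q hpq
  obtain ⟨wlk⟩ := hpq
  induction wlk with
  | nil => exact SimpleGraph.Reachable.refl _
  | cons hadj _ ih =>
      rename_i p' r' q' _
      have hG : G.Adj ↑p' ↑r' := by simpa using hadj
      exact (h ↑p' ↑r' p'.2 r'.2 hG).trans ih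

/-- A 3-connected graph: every vertex outside a set of ≤ 2 vertices has a neighbor
outside that set. -/
lemma exists_nbr {V : Type*} [Fintype V] [DecidableEq V] {G : SimpleGraph V}
    (h3 : KConnected G 3) (u : V) (s' : Finset V) (hcard : s'.card ≤ 2)
    (hu : u ∉ s') : ∃ t, G.Adj u t ∧ t ∉ s' := by
  have hconn := h3.2 s' (lt_of_le_of_lt hcard (by norm_num))
  have hu' : u ∈ {v : V | v ∉ s'} := hu
  -- find a second vertex
  have hlt : (insert u s').card < Fintype.card V := by
    have h1 := Finset.card_insert_le u s'
    have h2 := h3.1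
    omega
  have hne : ((insert u s')ᶜ : Finset V).Nonempty := by
    rw [← Finset.card_pos, Finset.card_compl]
    omega
  obtain ⟨u', hu'c⟩ := hne
  rw [Finset.mem_compl, Finset.mem_insert] at hu'c
  push_neg at hu'c
  have hu'A : u' ∈ {v : V | v ∉ s'} := hu'c.2
  have hr := hconn.preconnected ⟨u, hu'⟩ ⟨u', hu'A⟩
  obtain ⟨r, hadj⟩ := exists_adj_of_reachable hr
    (by simp only [ne_eq, Subtype.mk.injEq]; exact fun h => hu'c.1 h.symm)
  exact ⟨↑r, by simpa using hadj, r.2⟩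

end helpers
set_option maxHeartbeats 1000000 in
/-- Let `G` be 3-connected with two disjoint edges `xy` and `vw`. Subdividing `xy` by a
new vertex `a`, subdividing `vw` by a new vertex `b`, and adding the edge `ab` yields
a 3-connected graph. -/
theorem stmt13 {V : Type*} [Fintype V] [DecidableEq V] (G : SimpleGraph V)
    (x y v w : V) (h3 : KConnected G 3) (hxy : G.Adj x y) (hvw : G.Adj v w)
    (hxv : x ≠ v) (hxw : x ≠ w) (hyv : y ≠ v) (hyw : y ≠ w) :
    KConnected (bg23 G x y v w) 3 := by
  have hxyne : x ≠ y := hxy.ne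
  have hvwne : v ≠ w := hvw.ne
  have hcardV := h3.1
  constructor
  · simp only [Fintype.card_sum, Fintype.card_bool]; omega
  intro s hs
  set H : SimpleGraph (V ⊕ Bool) := bg23 G x y v w with hH
  set B : Set (V ⊕ Bool) := {p : V ⊕ Bool | p ∉ s} with hBdef
  set sV : Finset V := s.preimage Sum.inl (Sum.inl_injective.injOn) with hsVdef
  have hmem : ∀ u : V, u ∈ sV ↔ (Sum.inl u : V ⊕ Bool) ∈ s := fun u => Finset.mem_preimage
  have hsVcard : sV.card ≤ s.card :=
    Finset.card_le_card_of_injOn Sum.inl (fun u hu => (hmem u).1 hu) (Sum.inl_injective.injOn)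
  by_cases ha : (Sum.inr true : V ⊕ Bool) ∈ s
  · by_cases hb : (Sum.inr false : V ⊕ Bool) ∈ s
    · -- Case C : both subdivision vertices removed; sV = ∅
      have hsV0 : sV = ∅ := by
        rw [← Finset.card_eq_zero]
        have h1 : sV.card ≤ ((s.erase (Sum.inr true)).erase (Sum.inr false)).card :=
          Finset.card_le_card_of_injOn Sum.inl (fun u hu => by
            rw [Finset.mem_coe, Finset.mem_erase, Finset.mem_erase]
            exact ⟨by simp, by simp, (hmem u).1 hu⟩) (Sum.inl_injective.injOn)
        have h2 := Finset.card_erase_of_mem ha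
        have hb' : (Sum.inr false : V ⊕ Bool) ∈ s.erase (Sum.inr true) :=
          Finset.mem_erase.2 ⟨by simp, hb⟩
        have h3' := Finset.card_erase_of_mem hb'
        omega
      have hallB : ∀ u : V, (Sum.inl u : V ⊕ Bool) ∈ B := by
        intro u h
        have := (hmem u).2 h
        rw [hsV0] at this
        exact absurd this (Finset.notMem_empty u)
      set A : Set V := {u : V | u ∉ ({x, v} : Finset V)} with hAdef
      have hGA := h3.2 ({x, v} : Finset V)
        (lt_of_le_of_lt (Finset.card_insert_le x {v}) (by simp))
      have hAB : ∀ u, u ∈ A → (Sum.inl u : V ⊕ Bool) ∈ B := fun u _ => hallB u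
      have hmemA : ∀ u : V, u ∈ A ↔ (u ≠ x ∧ u ≠ v) := by
        intro u
        simp only [hAdef, Set.mem_setOf_eq, Finset.mem_insert, Finset.mem_singleton]
        tauto
      have step : ∀ u u' (hu : u ∈ A) (hu' : u' ∈ A), G.Adj u u' →
          (H.induce B).Reachable ⟨Sum.inl u, hAB u hu⟩ ⟨Sum.inl u', hAB u' hu'⟩ := by
        intro u u' hu hu' hadj
        rw [hmemA] at hu hu'
        refine reach_of_adj H (hallB u) (hallB u') (bg23_adj_inl_inl G x y v w hadj ?_ ?_)
        · rintro (⟨h1, h2⟩ | ⟨h1, h2⟩)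
          · exact hu.1 h1
          · exact hu'.1 h2
        · rintro (⟨h1, h2⟩ | ⟨h1, h2⟩)
          · exact hu.2 h1
          · exact hu'.2 h2
      have mutR : ∀ u u' (hu : u ∈ A) (hu' : u' ∈ A),
          (H.induce B).Reachable ⟨Sum.inl u, hAB u hu⟩ ⟨Sum.inl u', hAB u' hu'⟩ :=
        fun u u' hu hu' => lift_reach G H Sum.inl A B hAB step ⟨u, hu⟩ ⟨u', hu'⟩
          (hGA.preconnected ⟨u, hu⟩ ⟨u', hu'⟩)
      obtain ⟨u₀, hu₀⟩ : ∃ u₀, u₀ ∈ A := by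
        have hne : (({x, v} : Finset V)ᶜ).Nonempty := by
          rw [← Finset.card_pos, Finset.card_compl]
          have := Finset.card_insert_le x ({v} : Finset V)
          simp only [Finset.card_singleton] at this
          omega
        obtain ⟨u₀, h0⟩ := hne
        exact ⟨u₀, Finset.mem_compl.1 h0⟩
      -- attach x
      obtain ⟨t₁, ht₁adj, ht₁⟩ := exists_nbr h3 x ({y, v} : Finset V)
        (Finset.card_insert_le y {v}) (by
          rw [Finset.mem_insert, Finset.mem_singleton]; push_neg; exact ⟨hxyne, hxv⟩)
      rw [Finset.mem_insert, Finset.mem_singleton] at ht₁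
      push_neg at ht₁
      have ht₁A : t₁ ∈ A := (hmemA t₁).2 ⟨fun h => ht₁adj.ne' h, ht₁.2⟩
      have reachx : (H.induce B).Reachable ⟨Sum.inl x, hallB x⟩ ⟨Sum.inl u₀, hallB u₀⟩ := by
        refine (reach_of_adj H (hallB x) (hallB t₁)
          (bg23_adj_inl_inl G x y v w ht₁adj ?_ ?_)).trans (mutR t₁ u₀ ht₁A hu₀)
        · rintro (⟨h1, h2⟩ | ⟨h1, h2⟩)
          · exact ht₁.1 h2
          · exact hxyne h1
        · rintro (⟨h1, h2⟩ | ⟨h1, h2⟩)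
          · exact hxv h1
          · exact hxw h1
      -- attach v
      obtain ⟨t₂, ht₂adj, ht₂⟩ := exists_nbr h3 v ({w, x} : Finset V)
        (Finset.card_insert_le w {x}) (by
          rw [Finset.mem_insert, Finset.mem_singleton]; push_neg
          exact ⟨hvwne, fun h => hxv h.symm⟩)
      rw [Finset.mem_insert, Finset.mem_singleton] at ht₂
      push_neg at ht₂
      have ht₂A : t₂ ∈ A := (hmemA t₂).2 ⟨ht₂.2, fun h => ht₂adj.ne' h⟩
      have reachv : (H.induce B).Reachable ⟨Sum.inl v, hallB v⟩ ⟨Sum.inl u₀, hallB u₀⟩ := by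
        refine (reach_of_adj H (hallB v) (hallB t₂)
          (bg23_adj_inl_inl G x y v w ht₂adj ?_ ?_)).trans (mutR t₂ u₀ ht₂A hu₀)
        · rintro (⟨h1, h2⟩ | ⟨h1, h2⟩)
          · exact hxv h1.symm
          · exact hyv h1.symm
        · rintro (⟨h1, h2⟩ | ⟨h1, h2⟩)
          · exact ht₂.1 h2
          · exact hvwne h1
      have key : ∀ p : ↥B, (H.induce B).Reachable p ⟨Sum.inl u₀, hallB u₀⟩ := by
        rintro ⟨(u | c), hp⟩
        · by_cases huA : u ∈ A
          · exact mutR u u₀ huA hu₀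
          · rw [hmemA] at huA
            push_neg at huA
            by_cases hux : u = x
            · subst hux; exact reachx
            · have huv : u = v := huA hux
              subst huv; exact reachv
        · cases c
          · exact absurd hb hp
          · exact absurd ha hp
      exact (SimpleGraph.connected_iff _).2 ⟨fun p q => (key p).trans (key q).symm, ⟨⟨Sum.inl u₀, hallB u₀⟩⟩⟩
    · -- Case B : a removed, b survives
      have hsV1 : sV.card ≤ 1 := by
        have h1 : sV.card ≤ (s.erase (Sum.inr true)).card :=
          Finset.card_le_card_of_injOn Sum.inl
            (fun u hu => Finset.mem_erase.2 ⟨by simp, (hmem u).1 hu⟩)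
            (Sum.inl_injective.injOn)
        have h2 := Finset.card_erase_of_mem ha
        omega
      by_cases hxs : x ∈ sV ∨ y ∈ sV
      · -- B1 : x or y already removed; edge xy is irrelevant
        set A : Set V := {u : V | u ∉ sV} with hAdef
        have hGA := h3.2 sV (by omega)
        have hAB : ∀ u, u ∈ A → (Sum.inl u : V ⊕ Bool) ∈ B := by
          intro u hu h
          exact hu ((hmem u).2 h)
        have step : ∀ u u' (hu : u ∈ A) (hu' : u' ∈ A), G.Adj u u' →
            (H.induce B).Reachable ⟨Sum.inl u, hAB u hu⟩ ⟨Sum.inl u', hAB u' hu'⟩ := by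
          intro u u' hu hu' hadj
          simp only [hAdef, Set.mem_setOf_eq] at hu hu'
          by_cases hp1 : (u = x ∧ u' = y) ∨ (u = y ∧ u' = x)
          · exfalso
            rcases hp1 with ⟨rfl, rfl⟩ | ⟨rfl, rfl⟩ <;> tauto
          by_cases hp2 : (u = v ∧ u' = w) ∨ (u = w ∧ u' = v)
          · have h1 := bg23_adj_inl_b G x y v w (u := u) (by tauto)
            have h2 := bg23_adj_inl_b G x y v w (u := u') (by tauto)
            exact (reach_of_adj H (hAB u hu) hb h1).trans
              (reach_of_adj H (hAB u' hu') hb h2).symm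
          · exact reach_of_adj H (hAB u hu) (hAB u' hu')
              (bg23_adj_inl_inl G x y v w hadj hp1 hp2)
        have mutR : ∀ u u' (hu : u ∈ A) (hu' : u' ∈ A),
            (H.induce B).Reachable ⟨Sum.inl u, hAB u hu⟩ ⟨Sum.inl u', hAB u' hu'⟩ :=
          fun u u' hu hu' => lift_reach G H Sum.inl A B hAB step ⟨u, hu⟩ ⟨u', hu'⟩
            (hGA.preconnected ⟨u, hu⟩ ⟨u', hu'⟩)
        obtain ⟨u₀, hu₀⟩ : ∃ u₀, u₀ ∈ A := by
          have hne : (sVᶜ : Finset V).Nonempty := by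
            rw [← Finset.card_pos, Finset.card_compl]; omega
          obtain ⟨u₀, h0⟩ := hne
          exact ⟨u₀, Finset.mem_compl.1 h0⟩
        have hvA : v ∈ A := by
          intro hv
          rcases hxs with h | h
          · exact hxv (Finset.card_le_one.1 hsV1 _ h _ hv)
          · exact hyv (Finset.card_le_one.1 hsV1 _ h _ hv)
        have keyB : (H.induce B).Reachable ⟨Sum.inr false, hb⟩ ⟨Sum.inl u₀, hAB u₀ hu₀⟩ :=
          (reach_of_adj H hb (hAB v hvA)
            (bg23_adj_inl_b G x y v w (Or.inl rfl)).symm).trans (mutR v u₀ hvA hu₀)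
        have key : ∀ p : ↥B, (H.induce B).Reachable p ⟨Sum.inl u₀, hAB u₀ hu₀⟩ := by
          rintro ⟨(u | c), hp⟩
          · exact mutR u u₀ (fun h => hp ((hmem u).1 h)) hu₀
          · cases c
            · exact keyB
            · exact absurd ha hp
        exact (SimpleGraph.connected_iff _).2 ⟨fun p q => (key p).trans (key q).symm, ⟨⟨Sum.inl u₀, hAB u₀ hu₀⟩⟩⟩
      · -- B2 : x, y both survive; delete x as well, then attach it by a third neighbor
        push_neg at hxs
        set A : Set V := {u : V | u ∉ insert x sV} with hAdef
        have hGA := h3.2 (insert x sV) (by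
          have := Finset.card_insert_le x sV; omega)
        have hAB : ∀ u, u ∈ A → (Sum.inl u : V ⊕ Bool) ∈ B := by
          intro u hu h
          exact hu (Finset.mem_insert_of_mem ((hmem u).2 h))
        have hmemA : ∀ u : V, u ∈ A ↔ (u ≠ x ∧ u ∉ sV) := by
          intro u
          simp only [hAdef, Set.mem_setOf_eq, Finset.mem_insert]
          tauto
        have step : ∀ u u' (hu : u ∈ A) (hu' : u' ∈ A), G.Adj u u' →
            (H.induce B).Reachable ⟨Sum.inl u, hAB u hu⟩ ⟨Sum.inl u', hAB u' hu'⟩ := by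
          intro u u' hu hu' hadj
          have hu2 := (hmemA u).1 hu
          have hu2' := (hmemA u').1 hu'
          by_cases hp1 : (u = x ∧ u' = y) ∨ (u = y ∧ u' = x)
          · exfalso
            rcases hp1 with ⟨rfl, rfl⟩ | ⟨rfl, rfl⟩
            · exact hu2.1 rfl
            · exact hu2'.1 rfl
          by_cases hp2 : (u = v ∧ u' = w) ∨ (u = w ∧ u' = v)
          · have h1 := bg23_adj_inl_b G x y v w (u := u) (by tauto)
            have h2 := bg23_adj_inl_b G x y v w (u := u') (by tauto)
            exact (reach_of_adj H (hAB u hu) hb h1).trans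
              (reach_of_adj H (hAB u' hu') hb h2).symm
          · exact reach_of_adj H (hAB u hu) (hAB u' hu')
              (bg23_adj_inl_inl G x y v w hadj hp1 hp2)
        have mutR : ∀ u u' (hu : u ∈ A) (hu' : u' ∈ A),
            (H.induce B).Reachable ⟨Sum.inl u, hAB u hu⟩ ⟨Sum.inl u', hAB u' hu'⟩ :=
          fun u u' hu hu' => lift_reach G H Sum.inl A B hAB step ⟨u, hu⟩ ⟨u', hu'⟩
            (hGA.preconnected ⟨u, hu⟩ ⟨u', hu'⟩)
        obtain ⟨u₀, hu₀⟩ : ∃ u₀, u₀ ∈ A := by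
          have hne : ((insert x sV)ᶜ : Finset V).Nonempty := by
            rw [← Finset.card_pos, Finset.card_compl]
            have := Finset.card_insert_le x sV; omega
          obtain ⟨u₀, h0⟩ := hne
          exact ⟨u₀, Finset.mem_compl.1 h0⟩
        have hxB : (Sum.inl x : V ⊕ Bool) ∈ B := fun h => hxs.1 ((hmem x).2 h)
        obtain ⟨t₁, ht₁adj, ht₁⟩ := exists_nbr h3 x (insert y sV)
          (by have := Finset.card_insert_le y sV; omega)
          (by rw [Finset.mem_insert]; push_neg; exact ⟨hxyne, hxs.1⟩)
        rw [Finset.mem_insert] at ht₁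
        push_neg at ht₁
        have ht₁A : t₁ ∈ A := (hmemA t₁).2 ⟨fun h => ht₁adj.ne' h, ht₁.2⟩
        have reachx : (H.induce B).Reachable ⟨Sum.inl x, hxB⟩ ⟨Sum.inl u₀, hAB u₀ hu₀⟩ := by
          refine (reach_of_adj H hxB (hAB t₁ ht₁A)
            (bg23_adj_inl_inl G x y v w ht₁adj ?_ ?_)).trans (mutR t₁ u₀ ht₁A hu₀)
          · rintro (⟨h1, h2⟩ | ⟨h1, h2⟩)
            · exact ht₁.1 h2
            · exact hxyne h1
          · rintro (⟨h1, h2⟩ | ⟨h1, h2⟩)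
            · exact hxv h1
            · exact hxw h1
        have hvwA : v ∈ A ∨ w ∈ A := by
          by_contra h
          push_neg at h
          obtain ⟨h1, h2⟩ := h
          rw [hmemA] at h1 h2
          push_neg at h1 h2
          have hv' : v ∈ sV := h1 (fun h => hxv h.symm)
          have hw' : w ∈ sV := h2 (fun h => hxw h.symm)
          exact hvwne (Finset.card_le_one.1 hsV1 _ hv' _ hw')
        have keyB : (H.induce B).Reachable ⟨Sum.inr false, hb⟩ ⟨Sum.inl u₀, hAB u₀ hu₀⟩ := by
          rcases hvwA with hA' | hA'
          · exact (reach_of_adj H hb (hAB v hA')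
              (bg23_adj_inl_b G x y v w (Or.inl rfl)).symm).trans (mutR v u₀ hA' hu₀)
          · exact (reach_of_adj H hb (hAB w hA')
              (bg23_adj_inl_b G x y v w (Or.inr rfl)).symm).trans (mutR w u₀ hA' hu₀)
        have key : ∀ p : ↥B, (H.induce B).Reachable p ⟨Sum.inl u₀, hAB u₀ hu₀⟩ := by
          rintro ⟨(u | c), hp⟩
          · have husV : u ∉ sV := fun h => hp ((hmem u).1 h)
            by_cases hux : u = x
            · subst hux; exact reachx
            · exact mutR u u₀ ((hmemA u).2 ⟨hux, husV⟩) hu₀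
          · cases c
            · exact keyB
            · exact absurd ha hp
        exact (SimpleGraph.connected_iff _).2 ⟨fun p q => (key p).trans (key q).symm, ⟨⟨Sum.inl u₀, hAB u₀ hu₀⟩⟩⟩
  · by_cases hb : (Sum.inr false : V ⊕ Bool) ∈ s
    · -- Case B' : b removed, a survives (mirror of Case B)
      have hsV1 : sV.card ≤ 1 := by
        have h1 : sV.card ≤ (s.erase (Sum.inr false)).card :=
          Finset.card_le_card_of_injOn Sum.inl
            (fun u hu => Finset.mem_erase.2 ⟨by simp, (hmem u).1 hu⟩)
            (Sum.inl_injective.injOn)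
        have h2 := Finset.card_erase_of_mem hb
        omega
      by_cases hvs : v ∈ sV ∨ w ∈ sV
      · -- B'1
        set A : Set V := {u : V | u ∉ sV} with hAdef
        have hGA := h3.2 sV (by omega)
        have hAB : ∀ u, u ∈ A → (Sum.inl u : V ⊕ Bool) ∈ B := by
          intro u hu h
          exact hu ((hmem u).2 h)
        have step : ∀ u u' (hu : u ∈ A) (hu' : u' ∈ A), G.Adj u u' →
            (H.induce B).Reachable ⟨Sum.inl u, hAB u hu⟩ ⟨Sum.inl u', hAB u' hu'⟩ := by
          intro u u' hu hu' hadj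
          simp only [hAdef, Set.mem_setOf_eq] at hu hu'
          by_cases hp2 : (u = v ∧ u' = w) ∨ (u = w ∧ u' = v)
          · exfalso
            rcases hp2 with ⟨rfl, rfl⟩ | ⟨rfl, rfl⟩ <;> tauto
          by_cases hp1 : (u = x ∧ u' = y) ∨ (u = y ∧ u' = x)
          · have h1 := bg23_adj_inl_a G x y v w (u := u) (by tauto)
            have h2 := bg23_adj_inl_a G x y v w (u := u') (by tauto)
            exact (reach_of_adj H (hAB u hu) ha h1).trans
              (reach_of_adj H (hAB u' hu') ha h2).symm
          · exact reach_of_adj H (hAB u hu) (hAB u' hu')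
              (bg23_adj_inl_inl G x y v w hadj hp1 hp2)
        have mutR : ∀ u u' (hu : u ∈ A) (hu' : u' ∈ A),
            (H.induce B).Reachable ⟨Sum.inl u, hAB u hu⟩ ⟨Sum.inl u', hAB u' hu'⟩ :=
          fun u u' hu hu' => lift_reach G H Sum.inl A B hAB step ⟨u, hu⟩ ⟨u', hu'⟩
            (hGA.preconnected ⟨u, hu⟩ ⟨u', hu'⟩)
        obtain ⟨u₀, hu₀⟩ : ∃ u₀, u₀ ∈ A := by
          have hne : (sVᶜ : Finset V).Nonempty := by
            rw [← Finset.card_pos, Finset.card_compl]; omega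
          obtain ⟨u₀, h0⟩ := hne
          exact ⟨u₀, Finset.mem_compl.1 h0⟩
        have hxA : x ∈ A := by
          intro hx'
          rcases hvs with h | h
          · exact hxv (Finset.card_le_one.1 hsV1 _ hx' _ h)
          · exact hxw (Finset.card_le_one.1 hsV1 _ hx' _ h)
        have keyA : (H.induce B).Reachable ⟨Sum.inr true, ha⟩ ⟨Sum.inl u₀, hAB u₀ hu₀⟩ :=
          (reach_of_adj H ha (hAB x hxA)
            (bg23_adj_inl_a G x y v w (Or.inl rfl)).symm).trans (mutR x u₀ hxA hu₀)
        have key : ∀ p : ↥B, (H.induce B).Reachable p ⟨Sum.inl u₀, hAB u₀ hu₀⟩ := by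
          rintro ⟨(u | c), hp⟩
          · exact mutR u u₀ (fun h => hp ((hmem u).1 h)) hu₀
          · cases c
            · exact absurd hb hp
            · exact keyA
        exact (SimpleGraph.connected_iff _).2 ⟨fun p q => (key p).trans (key q).symm, ⟨⟨Sum.inl u₀, hAB u₀ hu₀⟩⟩⟩
      · -- B'2
        push_neg at hvs
        set A : Set V := {u : V | u ∉ insert v sV} with hAdef
        have hGA := h3.2 (insert v sV) (by
          have := Finset.card_insert_le v sV; omega)
        have hAB : ∀ u, u ∈ A → (Sum.inl u : V ⊕ Bool) ∈ B := by
          intro u hu h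
          exact hu (Finset.mem_insert_of_mem ((hmem u).2 h))
        have hmemA : ∀ u : V, u ∈ A ↔ (u ≠ v ∧ u ∉ sV) := by
          intro u
          simp only [hAdef, Set.mem_setOf_eq, Finset.mem_insert]
          tauto
        have step : ∀ u u' (hu : u ∈ A) (hu' : u' ∈ A), G.Adj u u' →
            (H.induce B).Reachable ⟨Sum.inl u, hAB u hu⟩ ⟨Sum.inl u', hAB u' hu'⟩ := by
          intro u u' hu hu' hadj
          have hu2 := (hmemA u).1 hu
          have hu2' := (hmemA u').1 hu'
          by_cases hp2 : (u = v ∧ u' = w) ∨ (u = w ∧ u' = v)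
          · exfalso
            rcases hp2 with ⟨rfl, rfl⟩ | ⟨rfl, rfl⟩
            · exact hu2.1 rfl
            · exact hu2'.1 rfl
          by_cases hp1 : (u = x ∧ u' = y) ∨ (u = y ∧ u' = x)
          · have h1 := bg23_adj_inl_a G x y v w (u := u) (by tauto)
            have h2 := bg23_adj_inl_a G x y v w (u := u') (by tauto)
            exact (reach_of_adj H (hAB u hu) ha h1).trans
              (reach_of_adj H (hAB u' hu') ha h2).symm
          · exact reach_of_adj H (hAB u hu) (hAB u' hu')
              (bg23_adj_inl_inl G x y v w hadj hp1 hp2)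
        have mutR : ∀ u u' (hu : u ∈ A) (hu' : u' ∈ A),
            (H.induce B).Reachable ⟨Sum.inl u, hAB u hu⟩ ⟨Sum.inl u', hAB u' hu'⟩ :=
          fun u u' hu hu' => lift_reach G H Sum.inl A B hAB step ⟨u, hu⟩ ⟨u', hu'⟩
            (hGA.preconnected ⟨u, hu⟩ ⟨u', hu'⟩)
        obtain ⟨u₀, hu₀⟩ : ∃ u₀, u₀ ∈ A := by
          have hne : ((insert v sV)ᶜ : Finset V).Nonempty := by
            rw [← Finset.card_pos, Finset.card_compl]
            have := Finset.card_insert_le v sV; omega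
          obtain ⟨u₀, h0⟩ := hne
          exact ⟨u₀, Finset.mem_compl.1 h0⟩
        have hvB : (Sum.inl v : V ⊕ Bool) ∈ B := fun h => hvs.1 ((hmem v).2 h)
        obtain ⟨t₂, ht₂adj, ht₂⟩ := exists_nbr h3 v (insert w sV)
          (by have := Finset.card_insert_le w sV; omega)
          (by rw [Finset.mem_insert]; push_neg; exact ⟨hvwne, hvs.1⟩)
        rw [Finset.mem_insert] at ht₂
        push_neg at ht₂
        have ht₂A : t₂ ∈ A := (hmemA t₂).2 ⟨fun h => ht₂adj.ne' h, ht₂.2⟩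
        have reachv : (H.induce B).Reachable ⟨Sum.inl v, hvB⟩ ⟨Sum.inl u₀, hAB u₀ hu₀⟩ := by
          refine (reach_of_adj H hvB (hAB t₂ ht₂A)
            (bg23_adj_inl_inl G x y v w ht₂adj ?_ ?_)).trans (mutR t₂ u₀ ht₂A hu₀)
          · rintro (⟨h1, h2⟩ | ⟨h1, h2⟩)
            · exact hxv h1.symm
            · exact hyv h1.symm
          · rintro (⟨h1, h2⟩ | ⟨h1, h2⟩)
            · exact ht₂.1 h2
            · exact hvwne h1
        have hxyA : x ∈ A ∨ y ∈ A := by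
          by_contra h
          push_neg at h
          obtain ⟨h1, h2⟩ := h
          rw [hmemA] at h1 h2
          push_neg at h1 h2
          have hx' : x ∈ sV := h1 hxv
          have hy' : y ∈ sV := h2 hyv
          exact hxyne (Finset.card_le_one.1 hsV1 _ hx' _ hy')
        have keyA : (H.induce B).Reachable ⟨Sum.inr true, ha⟩ ⟨Sum.inl u₀, hAB u₀ hu₀⟩ := by
          rcases hxyA with hA' | hA'
          · exact (reach_of_adj H ha (hAB x hA')
              (bg23_adj_inl_a G x y v w (Or.inl rfl)).symm).trans (mutR x u₀ hA' hu₀)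
          · exact (reach_of_adj H ha (hAB y hA')
              (bg23_adj_inl_a G x y v w (Or.inr rfl)).symm).trans (mutR y u₀ hA' hu₀)
        have key : ∀ p : ↥B, (H.induce B).Reachable p ⟨Sum.inl u₀, hAB u₀ hu₀⟩ := by
          rintro ⟨(u | c), hp⟩
          · have husV : u ∉ sV := fun h => hp ((hmem u).1 h)
            by_cases huv : u = v
            · subst huv; exact reachv
            · exact mutR u u₀ ((hmemA u).2 ⟨huv, husV⟩) hu₀
          · cases c
            · exact absurd hb hp
            · exact keyA
        exact (SimpleGraph.connected_iff _).2 ⟨fun p q => (key p).trans (key q).symm, ⟨⟨Sum.inl u₀, hAB u₀ hu₀⟩⟩⟩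
    · -- Case A : both a and b survive
      set A : Set V := {u : V | u ∉ sV} with hAdef
      have hGA := h3.2 sV (by omega)
      have hAB : ∀ u, u ∈ A → (Sum.inl u : V ⊕ Bool) ∈ B := by
        intro u hu h
        exact hu ((hmem u).2 h)
      have step : ∀ u u' (hu : u ∈ A) (hu' : u' ∈ A), G.Adj u u' →
          (H.induce B).Reachable ⟨Sum.inl u, hAB u hu⟩ ⟨Sum.inl u', hAB u' hu'⟩ := by
        intro u u' hu hu' hadj
        by_cases hp1 : (u = x ∧ u' = y) ∨ (u = y ∧ u' = x)
        · have h1 := bg23_adj_inl_a G x y v w (u := u) (by tauto)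
          have h2 := bg23_adj_inl_a G x y v w (u := u') (by tauto)
          exact (reach_of_adj H (hAB u hu) ha h1).trans
            (reach_of_adj H (hAB u' hu') ha h2).symm
        by_cases hp2 : (u = v ∧ u' = w) ∨ (u = w ∧ u' = v)
        · have h1 := bg23_adj_inl_b G x y v w (u := u) (by tauto)
          have h2 := bg23_adj_inl_b G x y v w (u := u') (by tauto)
          exact (reach_of_adj H (hAB u hu) hb h1).trans
            (reach_of_adj H (hAB u' hu') hb h2).symm
        · exact reach_of_adj H (hAB u hu) (hAB u' hu')
            (bg23_adj_inl_inl G x y v w hadj hp1 hp2)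
      have mutR : ∀ u u' (hu : u ∈ A) (hu' : u' ∈ A),
          (H.induce B).Reachable ⟨Sum.inl u, hAB u hu⟩ ⟨Sum.inl u', hAB u' hu'⟩ :=
        fun u u' hu hu' => lift_reach G H Sum.inl A B hAB step ⟨u, hu⟩ ⟨u', hu'⟩
          (hGA.preconnected ⟨u, hu⟩ ⟨u', hu'⟩)
      obtain ⟨u₀, hu₀⟩ : ∃ u₀, u₀ ∈ A := by
        have hne : (sVᶜ : Finset V).Nonempty := by
          rw [← Finset.card_pos, Finset.card_compl]; omega
        obtain ⟨u₀, h0⟩ := hne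
        exact ⟨u₀, Finset.mem_compl.1 h0⟩
      have keyA : (H.induce B).Reachable ⟨Sum.inr true, ha⟩ ⟨Sum.inl u₀, hAB u₀ hu₀⟩ := by
        by_cases hx1 : x ∈ sV
        · by_cases hy1 : y ∈ sV
          · -- both x and y removed, so v survives; go a - b - v
            have hvA : v ∈ A := by
              intro hv
              have hsub : ({x, y, v} : Finset V) ⊆ sV := by
                intro t ht
                simp only [Finset.mem_insert, Finset.mem_singleton] at ht
                rcases ht with rfl | rfl | rfl
                exacts [hx1, hy1, hv]
              have hc3 : ({x, y, v} : Finset V).card = 3 := by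
                rw [Finset.card_insert_of_notMem (by simp [hxyne, hxv]),
                  Finset.card_insert_of_notMem (by simp [hyv]), Finset.card_singleton]
              have := Finset.card_le_card hsub
              omega
            exact (reach_of_adj H ha hb (bg23_adj_ab G x y v w)).trans
              ((reach_of_adj H hb (hAB v hvA)
                (bg23_adj_inl_b G x y v w (Or.inl rfl)).symm).trans (mutR v u₀ hvA hu₀))
          · exact (reach_of_adj H ha (hAB y hy1)
              (bg23_adj_inl_a G x y v w (Or.inr rfl)).symm).trans (mutR y u₀ hy1 hu₀)
        · exact (reach_of_adj H ha (hAB x hx1)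
            (bg23_adj_inl_a G x y v w (Or.inl rfl)).symm).trans (mutR x u₀ hx1 hu₀)
      have keyB : (H.induce B).Reachable ⟨Sum.inr false, hb⟩ ⟨Sum.inl u₀, hAB u₀ hu₀⟩ :=
        (reach_of_adj H hb ha (bg23_adj_ab G x y v w).symm).trans keyA
      have key : ∀ p : ↥B, (H.induce B).Reachable p ⟨Sum.inl u₀, hAB u₀ hu₀⟩ := by
        rintro ⟨(u | c), hp⟩
        · exact mutR u u₀ (fun h => hp ((hmem u).1 h)) hu₀
        · cases c
          · exact keyB
          · exact keyA
      exact (SimpleGraph.connected_iff _).2 ⟨fun p q => (key p).trans (key q).symm, ⟨⟨Sum.inl u₀, hAB u₀ hu₀⟩⟩⟩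
end

section
/- Let G be a plane triangulation and let C be the set of its separating triangles. Any sequence of edge flips transforming G into a 4-connected triangulation must contain, for each separating triangle T ∈ C, a flip of an edge incident to T. Hence the minimum length of such a flip sequence is at least the minimum size of a set of edges of G that hits (is incident to) every separating triangle. -/
/-- `IsFlipStep G G' e` says that `G'` is obtained from `G` by flipping the edge
`e = uv`, which lies in the two triangles `uvp` and `uvq`: the edge `uv` is removed
and replaced by the other diagonal `pq` of the quadrilateral `upvq`. -/
def IsFlipStep {V : Type*} (G G' : SimpleGraph V) (e : Sym2 V) : Prop :=
  ∃ u v p q : V, e = s(u, v) ∧ G.Adj u v ∧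
    G.Adj u p ∧ G.Adj v p ∧ G.Adj u q ∧ G.Adj v q ∧ ¬ G.Adj p q ∧ p ≠ q ∧
    G' = SimpleGraph.fromEdgeSet ((G.edgeSet \ {s(u, v)}) ∪ {s(p, q)})

private lemma flip_key {V : Type*} {H : SimpleGraph V} {a b c u v p q : V}
    (huv : H.Adj u v) (hup : H.Adj u p) (hvp : H.Adj v p)
    (huq : H.Adj u q) (hvq : H.Adj v q)
    (hea : s(u,v) ≠ s(a,b)) (heb : s(u,v) ≠ s(a,c)) (hec : s(u,v) ≠ s(b,c))
    (hp : p ≠ a ∧ p ≠ b ∧ p ≠ c) (hq : q ≠ a ∧ q ≠ b ∧ q ≠ c) :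
    (H.induce {v : V | v ≠ a ∧ v ≠ b ∧ v ≠ c}).Reachable
      ⟨p, hp⟩ ⟨q, hq⟩ := by
  classical
  have hcase : (u ≠ a ∧ u ≠ b ∧ u ≠ c) ∨ (v ≠ a ∧ v ≠ b ∧ v ≠ c) := by
    by_contra hcon
    push_neg at hcon
    obtain ⟨hu, hv⟩ := hcon
    have hune := huv.ne
    rcases Classical.em (u = a) with hu1 | hu1
    · rcases Classical.em (v = b) with hv1 | hv1
      · exact hea (by rw [hu1, hv1])
      · rcases Classical.em (v = c) with hv2 | hv2
        · exact heb (by rw [hu1, hv2])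
        · exact hv2 (hv (fun hva => hune (by rw [hu1, hva])) hv1)
    · rcases Classical.em (u = b) with hu2 | hu2
      · rcases Classical.em (v = a) with hv1 | hv1
        · exact hea (by rw [hu2, hv1, Sym2.eq_swap])
        · rcases Classical.em (v = c) with hv2 | hv2
          · exact hec (by rw [hu2, hv2])
          · exact hv2 (hv hv1 (fun hvb => hune (by rw [hu2, hvb])))
      · rcases Classical.em (u = c) with hu3 | hu3
        · rcases Classical.em (v = a) with hv1 | hv1
          · exact heb (by rw [hu3, hv1, Sym2.eq_swap])
          · rcases Classical.em (v = b) with hv2 | hv2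
            · exact hec (by rw [hu3, hv2, Sym2.eq_swap])
            · exact hune (by rw [hu3, hv hv1 hv2])
        · exact hu3 (hu hu1 hu2)
  rcases hcase with hu | hv
  · have h1 : (H.induce {v : V | v ≠ a ∧ v ≠ b ∧ v ≠ c}).Adj ⟨p, hp⟩ ⟨u, hu⟩ := hup.symm
    have h2 : (H.induce {v : V | v ≠ a ∧ v ≠ b ∧ v ≠ c}).Adj ⟨u, hu⟩ ⟨q, hq⟩ := huq
    exact h1.reachable.trans h2.reachable
  · have h1 : (H.induce {v : V | v ≠ a ∧ v ≠ b ∧ v ≠ c}).Adj ⟨p, hp⟩ ⟨v, hv⟩ := hvp.symm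
    have h2 : (H.induce {v : V | v ≠ a ∧ v ≠ b ∧ v ≠ c}).Adj ⟨v, hv⟩ ⟨q, hq⟩ := hvq
    exact h1.reachable.trans h2.reachable

private lemma flip_step_connected {V : Type*} {H H' : SimpleGraph V} {e : Sym2 V} {a b c : V}
    (hf : IsFlipStep H H' e)
    (hea : e ≠ s(a,b)) (heb : e ≠ s(a,c)) (hec : e ≠ s(b,c))
    (hconn : (H'.induce {v : V | v ≠ a ∧ v ≠ b ∧ v ≠ c}).Connected) :
    (H.induce {v : V | v ≠ a ∧ v ≠ b ∧ v ≠ c}).Connected := by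
  obtain ⟨u, v, p, q, he, huv, hup, hvp, huq, hvq, hpq, hpqne, hH'⟩ := hf
  subst he
  rw [SimpleGraph.connected_iff]
  refine ⟨?_, ?_⟩
  · -- preconnected
    intro x y
    have hr := hconn.preconnected x y
    obtain ⟨w⟩ := hr
    induction w with
    | nil => exact SimpleGraph.Reachable.refl _
    | @cons x' y' z' hadj w ih =>
      refine SimpleGraph.Reachable.trans ?_ ih
      -- hadj : (H'.induce S).Adj x' y'
      have hadj' : H'.Adj ↑x' ↑y' := hadj
      rw [hH'] at hadj'
      rw [SimpleGraph.fromEdgeSet_adj] at hadj'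
      obtain ⟨hmem, hne⟩ := hadj'
      rcases hmem with ⟨hH, _⟩ | hnew
    
      · exact SimpleGraph.Adj.reachable
          (show (H.induce {v : V | v ≠ a ∧ v ≠ b ∧ v ≠ c}).Adj x' y' from
            (SimpleGraph.mem_edgeSet H).mp hH)
      · simp only [Set.mem_singleton_iff, Sym2.eq, Sym2.rel_iff', Prod.mk.injEq,
          Prod.swap_prod_mk] at hnew
        rcases hnew with ⟨h1, h2⟩ | ⟨h1, h2⟩
        · have key := flip_key huv hup hvp huq hvq hea heb hec
            (h1 ▸ x'.2) (h2 ▸ y'.2)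
          have : x' = ⟨p, h1 ▸ x'.2⟩ := Subtype.ext h1
          have hy : y' = ⟨q, h2 ▸ y'.2⟩ := Subtype.ext h2
          rw [this, hy]
          exact key
        · have key := flip_key huv hup hvp huq hvq hea heb hec
            (h2 ▸ y'.2) (h1 ▸ x'.2)
          have : x' = ⟨q, h1 ▸ x'.2⟩ := Subtype.ext h1
          have hy : y' = ⟨p, h2 ▸ y'.2⟩ := Subtype.ext h2
          rw [this, hy]
          exact key.symm
  · exact hconn.nonempty

/-- If a sequence of edge flips transforms a triangulation `G` into a 4-connected
triangulation, then for every separating triangle `abc` of `G`, some flip in the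
sequence flips one of the three edges of the triangle. Hence the minimum number of
flips to 4-connectivity is at least the minimum size of an edge set hitting all
separating triangles. -/
theorem stmt14 {V : Type*} [Fintype V] (G : SimpleGraph V)
    (seq : ℕ → SimpleGraph V) (flips : ℕ → Sym2 V) (m : ℕ)
    (h0 : seq 0 = G) (hstep : ∀ i < m, IsFlipStep (seq i) (seq (i + 1)) (flips i))
    (h4 : KConnected (seq m) 4)
    (a b c : V) (hab : G.Adj a b) (hac : G.Adj a c) (hbc : G.Adj b c)
    (hsep : ¬ (G.induce {v : V | v ≠ a ∧ v ≠ b ∧ v ≠ c}).Connected) :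
    ∃ i < m, flips i = s(a, b) ∨ flips i = s(a, c) ∨ flips i = s(b, c) := by
  classical
  by_contra hcon
  push_neg at hcon
  -- seq m induced is connected
  have hcard : ({a, b, c} : Finset V).card < 4 := by
    have h1 := Finset.card_insert_le a ({b, c} : Finset V)
    have h2 := Finset.card_insert_le b ({c} : Finset V)
    simp only [Finset.card_singleton] at h2
    omega
  have hm := h4.2 {a, b, c} hcard
  have hset : {v : V | v ∉ ({a, b, c} : Finset V)} = {v : V | v ≠ a ∧ v ≠ b ∧ v ≠ c} := by
    ext x
    simp [not_or]
  rw [hset] at hm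
  -- backward induction
  have haux : ∀ j : ℕ, ((seq (m - j)).induce {v : V | v ≠ a ∧ v ≠ b ∧ v ≠ c}).Connected := by
    intro j
    induction j with
    | zero => simpa using hm
    | succ j ih =>
      rcases Nat.lt_or_ge j m with hj | hj
      · have hi : m - (j + 1) < m := by omega
        have hi2 : m - (j + 1) + 1 = m - j := by omega
        have hstep' := hstep (m - (j + 1)) hi
        rw [hi2] at hstep'
        have hne := hcon (m - (j + 1)) hi
        exact flip_step_connected hstep' hne.1 hne.2.1 hne.2.2 ih
      · have : m - (j + 1) = m - j := by omega
        rw [this]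
        exact ih
  have := haux m
  rw [Nat.sub_self, h0] at this
  exact hsep this
end

section
/- Let T be a tree on n vertices with maximum degree at most 3 and n ≥ 2k−1 for some integer k ≥ 1. Then T can be partitioned into vertex-disjoint subtrees, each containing at least 2k−1 and at most 3(2k−1) vertices. -/
set_option linter.unusedSectionVars false

namespace Stmt18Aux

open SimpleGraph Finset

variable {V : Type*} [Fintype V] [DecidableEq V] (T : SimpleGraph V)

/-- Reachability via a walk whose support stays inside `A`. -/
def ReachIn (A : Finset V) (u v : V) : Prop :=
  ∃ w : T.Walk u v, ∀ x ∈ w.support, x ∈ A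

/-- Connectivity of the set `A` inside `T`. -/
def Conn (A : Finset V) : Prop :=
  ∀ u ∈ A, ∀ v ∈ A, ReachIn T A u v

variable {T}

lemma reachIn_refl {A : Finset V} {u : V} (hu : u ∈ A) : ReachIn T A u u :=
  ⟨SimpleGraph.Walk.nil, by simp [hu]⟩

lemma ReachIn.symm {A : Finset V} {u v : V} (h : ReachIn T A u v) : ReachIn T A v u := by
  obtain ⟨w, hw⟩ := h
  exact ⟨w.reverse, fun x hx => hw x (by simpa [SimpleGraph.Walk.support_reverse] using hx)⟩

lemma ReachIn.trans {A : Finset V} {u v x : V} (h : ReachIn T A u v) (h' : ReachIn T A v x) :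
    ReachIn T A u x := by
  obtain ⟨w, hw⟩ := h
  obtain ⟨w', hw'⟩ := h'
  refine ⟨w.append w', fun z hz => ?_⟩
  rw [SimpleGraph.Walk.mem_support_append_iff] at hz
  exact hz.elim (hw z) (hw' z)

lemma reachIn_adj {A : Finset V} {u v : V} (hu : u ∈ A) (hv : v ∈ A) (h : T.Adj u v) :
    ReachIn T A u v :=
  ⟨SimpleGraph.Walk.cons h SimpleGraph.Walk.nil, by simp [hu, hv]⟩

lemma ReachIn.mono {A B : Finset V} {u v : V} (hAB : A ⊆ B) (h : ReachIn T A u v) :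
    ReachIn T B u v := by
  obtain ⟨w, hw⟩ := h
  exact ⟨w, fun x hx => hAB (hw x hx)⟩

/-- Transfer a walk with support in `A` to reachability in the induced graph. -/
lemma walk_to_induce {A : Finset V} : ∀ {u v : V} (w : T.Walk u v)
    (hw : ∀ x ∈ w.support, x ∈ A),
    (T.induce (A : Set V)).Reachable ⟨u, by simpa using hw u w.start_mem_support⟩
      ⟨v, by simpa using hw v w.end_mem_support⟩ := by
  intro u v w
  induction w with
  | nil => intro _; exact SimpleGraph.Reachable.refl _
  | @cons u x v h p ih =>
    intro hw
    have h1 : ∀ z ∈ p.support, z ∈ A := fun z hz => hw z (by simp [hz])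
    have hadj : (T.induce (A : Set V)).Adj ⟨u, by simpa using hw u (by simp)⟩
        ⟨x, by simpa using hw x (by simp)⟩ := by
      simpa using h
    exact hadj.reachable.trans (ih h1)

lemma Conn.induce_connected {A : Finset V} (h : Conn T A) (hA : A.Nonempty) :
    (T.induce (A : Set V)).Connected := by
  obtain ⟨x, hx⟩ := hA
  haveI : Nonempty (A : Set V) := ⟨⟨x, by simpa using hx⟩⟩
  refine ⟨fun u v => ?_⟩
  obtain ⟨w, hw⟩ := h u (by simpa using u.2) v (by simpa using v.2)
  simpa using walk_to_induce w hw

/-- Gluing two connected sets along an edge (or a shared vertex). -/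
lemma Conn.union {A B : Finset V} (hA : Conn T A) (hB : Conn T B) {a b : V}
    (ha : a ∈ A) (hb : b ∈ B) (hab : a = b ∨ T.Adj a b) : Conn T (A ∪ B) := by
  have hreach : ReachIn T (A ∪ B) a b := by
    rcases hab with rfl | hadj
    · exact reachIn_refl (by simp [ha])
    · exact reachIn_adj (by simp [ha]) (by simp [hb]) hadj
  have key : ∀ u ∈ A ∪ B, ReachIn T (A ∪ B) u a := by
    intro u hu
    rcases Finset.mem_union.1 hu with hu | hu
    · exact (hA u hu a ha).mono Finset.subset_union_left
    · exact ((hB u hu b hb).mono Finset.subset_union_right).trans hreach.symm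
  intro u hu v hv
  exact (key u hu).trans (key v hv).symm

/-- A walk from inside `a` to outside `a` crosses an edge of the boundary. -/
lemma exists_crossing {s a : Finset V} : ∀ {u v : V} (w : T.Walk u v),
    (∀ x ∈ w.support, x ∈ s) → u ∈ a → v ∉ a →
    ∃ x y, x ∈ a ∧ y ∈ s ∧ y ∉ a ∧ T.Adj x y := by
  intro u v w
  induction w with
  | nil => intro _ hu hv; exact absurd hu hv
  | @cons u x v h p ih =>
    intro hs hu hv
    by_cases hx : x ∈ a
    · exact ih (fun z hz => hs z (by simp [hz])) hx hv
    · exact ⟨u, x, hu, hs x (by simp), hx, h⟩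

/-- The last step of a walk into `r` gives a neighbour of `r` reachable avoiding `r`. -/
lemma exists_last_step {a : Finset V} : ∀ {z r : V} (w : T.Walk z r),
    (∀ x ∈ w.support, x ∈ a) → z ≠ r →
    ∃ y, T.Adj y r ∧ y ∈ a.erase r ∧ ReachIn T (a.erase r) z y := by
  intro z r w
  induction w with
  | nil => intro _ hz; exact absurd rfl hz
  | @cons z z₂ r h p ih =>
    intro hs hz
    have hz_mem : z ∈ a.erase r := Finset.mem_erase.2 ⟨hz, hs z (by simp)⟩
    by_cases h2 : z₂ = r
    · subst h2; exact ⟨z, h, hz_mem, reachIn_refl hz_mem⟩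
    · obtain ⟨y, hy1, hy2, hy3⟩ := ih (fun x hx => hs x (by simp [hx])) h2
      have hz2 : z₂ ∈ a.erase r := Finset.mem_erase.2 ⟨h2, hs z₂ (by simp)⟩
      exact ⟨y, hy1, hy2, (reachIn_adj hz_mem hz2 h).trans hy3⟩

/-- A walk to `r` inside `a` can avoid a set `C` that is "closed" except towards `r`. -/
lemma avoid {a C : Finset V} : ∀ {u r : V} (w : T.Walk u r), r ∈ a → r ∉ C →
    (∀ p ∈ C, ∀ q ∈ a, T.Adj p q → q = r ∨ q ∈ C) →
    (∀ x ∈ w.support, x ∈ a) → u ∉ C →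
    ReachIn T (a \ C) u r := by
  intro u r w
  induction w with
  | nil => intro hr hCr _ _ _; exact reachIn_refl (Finset.mem_sdiff.2 ⟨hr, hCr⟩)
  | @cons u u₂ r h p ih =>
    intro hr hCr hcl hs hu
    have hu' : u ∈ a \ C := Finset.mem_sdiff.2 ⟨hs u (by simp), hu⟩
    by_cases h2 : u₂ ∈ C
    · rcases hcl u₂ h2 u (hs u (by simp)) h.symm with h3 | h3
      · subst h3; exact reachIn_refl (Finset.mem_sdiff.2 ⟨hr, hCr⟩)
      · exact absurd h3 hu
    · exact (reachIn_adj hu' (Finset.mem_sdiff.2 ⟨hs u₂ (by simp), h2⟩) h).trans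
        (ih hr hCr hcl (fun x hx => hs x (by simp [hx])) h2)

lemma conn_sdiff {a C : Finset V} {r : V} (ha : Conn T a) (hr : r ∈ a) (hCr : r ∉ C)
    (hcl : ∀ p ∈ C, ∀ q ∈ a, T.Adj p q → q = r ∨ q ∈ C) : Conn T (a \ C) := by
  have key : ∀ u ∈ a \ C, ReachIn T (a \ C) u r := by
    intro u hu
    obtain ⟨w, hw⟩ := ha u (Finset.mem_sdiff.1 hu).1 r hr
    exact avoid w hr hCr hcl hw (Finset.mem_sdiff.1 hu).2
  intro u hu v hv
  exact (key u hu).trans (key v hv).symm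

open scoped Classical in
/-- The connected component of `x` within `A`. -/
noncomputable def comp (T : SimpleGraph V) (A : Finset V) (x : V) : Finset V :=
  A.filter (ReachIn T A x)

lemma mem_comp {A : Finset V} {x y : V} : y ∈ comp T A x ↔ y ∈ A ∧ ReachIn T A x y := by
  simp [comp]

lemma comp_subset {A : Finset V} {x : V} : comp T A x ⊆ A := fun y hy => (mem_comp.1 hy).1

lemma reachIn_of_mem_support {A : Finset V} {u v : V} (w : T.Walk u v)
    (hw : ∀ x ∈ w.support, x ∈ A) {z : V} (hz : z ∈ w.support) : ReachIn T A u z :=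
  ⟨w.takeUntil z hz, fun t ht => hw t (SimpleGraph.Walk.support_takeUntil_subset _ _ ht)⟩

lemma ReachIn.right_mem {A : Finset V} {u v : V} (h : ReachIn T A u v) : v ∈ A := by
  obtain ⟨w, hw⟩ := h
  exact hw v w.end_mem_support

lemma conn_comp {A : Finset V} {x : V} : Conn T (comp T A x) := by
  intro u hu v hv
  obtain ⟨hu1, w1, hw1⟩ := mem_comp.1 hu
  obtain ⟨hv1, w2, hw2⟩ := mem_comp.1 hv
  refine ⟨w1.reverse.append w2, fun z hz => ?_⟩
  rw [SimpleGraph.Walk.mem_support_append_iff] at hz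
  have hzA : ReachIn T A x z := by
    rcases hz with hz | hz
    · rw [SimpleGraph.Walk.support_reverse, List.mem_reverse] at hz
      exact reachIn_of_mem_support w1 hw1 hz
    · exact reachIn_of_mem_support w2 hw2 hz
  exact mem_comp.2 ⟨hzA.right_mem, hzA⟩

lemma comp_closure {A : Finset V} {x p q : V} (hp : p ∈ comp T A x) (hq : q ∈ A)
    (h : T.Adj p q) : q ∈ comp T A x :=
  mem_comp.2 ⟨hq, ((mem_comp.1 hp).2).trans (reachIn_adj (mem_comp.1 hp).1 hq h)⟩

/-- The key splitting lemma: a connected set of size `> 3m` in a graph of max degree `≤ 3`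
splits into two connected pieces of size `≥ m`. -/
lemma exists_split [DecidableRel T.Adj] {m : ℕ} (hm : 1 ≤ m) (hdeg : ∀ v, T.degree v ≤ 3)
    {s : Finset V} (hs : Conn T s) (hcard : 3 * m + 1 ≤ s.card) :
    ∃ a, a ⊆ s ∧ Conn T a ∧ Conn T (s \ a) ∧ m ≤ a.card ∧ m ≤ (s \ a).card := by
  classical
  have hsP : s ∈ s.powerset.filter
      (fun t => m ≤ t.card ∧ Conn T t ∧ ((s \ t) = ∅ ∨ Conn T (s \ t))) := by
    simp only [Finset.mem_filter, Finset.mem_powerset]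
    exact ⟨le_rfl, ⟨by omega, hs, Or.inl (Finset.sdiff_self s)⟩⟩
  obtain ⟨a, ha, hamin⟩ := Finset.exists_min_image _ Finset.card ⟨s, hsP⟩
  rw [Finset.mem_filter, Finset.mem_powerset] at ha
  obtain ⟨has, ham, haconn, haconn'⟩ := ha
  have hmin : ∀ t, t ⊆ s → m ≤ t.card → Conn T t → ((s \ t) = ∅ ∨ Conn T (s \ t)) →
      a.card ≤ t.card := by
    intro t ht h1 h2 h3
    exact hamin t (by simp only [Finset.mem_filter, Finset.mem_powerset]; exact ⟨ht, h1, h2, h3⟩)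
  have hane : a.Nonempty := Finset.card_pos.1 (by omega)
  -- Component bound: any component of `a.erase r` has fewer than `m` vertices,
  -- provided `r` can see outside `a` (or `a = s`).
  have compbound : ∀ r ∈ a, ((s \ a) = ∅ ∨ ∃ v, v ∈ s ∧ v ∉ a ∧ T.Adj r v) →
      ∀ x, (comp T (a.erase r) x).card ≤ m - 1 := by
    intro r hr hrs x
    by_contra hbig
    set C := comp T (a.erase r) x with hC
    have hmC : m ≤ C.card := by omega
    have hCsub : C ⊆ a.erase r := comp_subset
    have hCa : C ⊆ a := hCsub.trans (Finset.erase_subset _ _)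
    have hrC : r ∉ C := fun h => (Finset.mem_erase.1 (hCsub h)).1 rfl
    have hcl : ∀ p ∈ C, ∀ q ∈ a, T.Adj p q → q = r ∨ q ∈ C := by
      intro p hp q hq hadj
      by_cases hqr : q = r
      · exact Or.inl hqr
      · exact Or.inr (comp_closure hp (Finset.mem_erase.2 ⟨hqr, hq⟩) hadj)
    have hconnAC : Conn T (a \ C) := conn_sdiff haconn hr hrC hcl
    have hsC : s \ C = (a \ C) ∪ (s \ a) := by
      ext z
      simp only [Finset.mem_sdiff, Finset.mem_union]
      constructor
      · intro ⟨hz1, hz2⟩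
        by_cases hza : z ∈ a
        · exact Or.inl ⟨hza, hz2⟩
        · exact Or.inr ⟨hz1, hza⟩
      · rintro (⟨hz1, hz2⟩ | ⟨hz1, hz2⟩)
        · exact ⟨has hz1, hz2⟩
        · exact ⟨hz1, fun h => hz2 (hCa h)⟩
    have hconnSC : Conn T (s \ C) := by
      rcases hrs with hrs | ⟨v, hv1, hv2, hv3⟩
      · rw [hsC, hrs, Finset.union_empty]; exact hconnAC
      · have hconnSA : Conn T (s \ a) := by
          rcases haconn' with h | h
          · exact absurd (Finset.sdiff_eq_empty_iff_subset.1 h hv1) hv2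
          · exact h
        rw [hsC]
        exact hconnAC.union hconnSA (Finset.mem_sdiff.2 ⟨hr, hrC⟩)
          (Finset.mem_sdiff.2 ⟨hv1, hv2⟩) (Or.inr hv3)
    have := hmin C (hCa.trans has) hmC conn_comp (Or.inr hconnSC)
    have hlt : C.card < a.card := by
      have h1 : C.card ≤ (a.erase r).card := Finset.card_le_card hCsub
      have h2 : (a.erase r).card + 1 = a.card := Finset.card_erase_add_one hr
      omega
    omega
  -- counting: `a.erase r` is covered by the components of the `≤` dehree-many neighbours of `r`
  have cardbound : ∀ r ∈ a, ((s \ a) = ∅ ∨ ∃ v, v ∈ s ∧ v ∉ a ∧ T.Adj r v) →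
      a.card ≤ 1 + ((a.erase r).filter (fun y => T.Adj y r)).card * (m - 1) := by
    intro r hr hrs
    set N := (a.erase r).filter (fun y => T.Adj y r) with hN
    have hcover : a.erase r ⊆ N.biUnion (fun y => comp T (a.erase r) y) := by
      intro z hz
      obtain ⟨hzr, hza⟩ := Finset.mem_erase.1 hz
      obtain ⟨w, hw⟩ := haconn z hza r hr
      obtain ⟨y, hy1, hy2, hy3⟩ := exists_last_step w hw hzr
      refine Finset.mem_biUnion.2 ⟨y, ?_, mem_comp.2 ⟨hz, hy3.symm⟩⟩
      exact Finset.mem_filter.2 ⟨hy2, hy1⟩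
    have h1 : (a.erase r).card ≤ N.card * (m - 1) := by
      calc (a.erase r).card ≤ (N.biUnion (fun y => comp T (a.erase r) y)).card :=
            Finset.card_le_card hcover
        _ ≤ N.card * (m - 1) :=
            Finset.card_biUnion_le_card_mul _ _ _ (fun y _ => compbound r hr hrs y)
    have h2 : (a.erase r).card + 1 = a.card := Finset.card_erase_add_one hr
    omega
  have nbound : ∀ r ∈ a, ((a.erase r).filter (fun y => T.Adj y r)).card ≤ T.degree r := by
    intro r hr
    refine Finset.card_le_card (fun y hy => ?_)
    rw [SimpleGraph.mem_neighborFinset]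
    exact (Finset.mem_filter.1 hy).2.symm
  by_cases hsa : s \ a = ∅
  · -- then `a = s`, and the counting gives a contradiction with `s.card ≥ 3m+1`
    exfalso
    have hsa' : s ⊆ a := Finset.sdiff_eq_empty_iff_subset.1 hsa
    have haeq : a = s := Finset.Subset.antisymm has hsa'
    obtain ⟨r, hr⟩ := hane
    have h1 := cardbound r hr (Or.inl hsa)
    have h2 := nbound r hr
    have h3 := hdeg r
    have h4 : s.card = a.card := by rw [haeq]
    have hNle : ((a.erase r).filter (fun y => T.Adj y r)).card ≤ 3 := by omega
    have h1' : a.card ≤ 1 + 3 * (m - 1) :=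
      h1.trans (Nat.add_le_add_left (Nat.mul_le_mul_right _ hNle) 1)
    omega
  · -- find the crossing edge, with endpoint `r ∈ a`
    obtain ⟨v₀, hv₀⟩ := Finset.nonempty_iff_ne_empty.2 hsa
    obtain ⟨u₀, hu₀⟩ := hane
    obtain ⟨w, hw⟩ := hs u₀ (has hu₀) v₀ (Finset.mem_sdiff.1 hv₀).1
    obtain ⟨r, v, hra, hvs, hva, hrv⟩ :=
      exists_crossing w hw hu₀ (Finset.mem_sdiff.1 hv₀).2
    have hcross : (s \ a) = ∅ ∨ ∃ v, v ∈ s ∧ v ∉ a ∧ T.Adj r v := Or.inr ⟨v, hvs, hva, hrv⟩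
    have h1 := cardbound r hra hcross
    -- the neighbour count is at most 2 here
    have hNle : ((a.erase r).filter (fun y => T.Adj y r)).card ≤ 2 := by
      set N := (a.erase r).filter (fun y => T.Adj y r) with hN
      have hvN : v ∉ N := fun h => hva ((Finset.erase_subset _ _) (Finset.mem_filter.1 h).1)
      have hsub : insert v N ⊆ T.neighborFinset r := by
        intro y hy
        rcases Finset.mem_insert.1 hy with rfl | hy
        · exact (SimpleGraph.mem_neighborFinset _ _ _).2 hrv
        · exact (SimpleGraph.mem_neighborFinset _ _ _).2 (Finset.mem_filter.1 hy).2.symm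
      have := Finset.card_le_card hsub
      rw [Finset.card_insert_of_notMem hvN] at this
      have := hdeg r
      simp only [SimpleGraph.degree] at *
      omega
    have hacard : a.card ≤ 1 + 2 * (m - 1) :=
      h1.trans (Nat.add_le_add_left (Nat.mul_le_mul_right _ hNle) 1)
    have hsdcard : (s \ a).card = s.card - a.card := Finset.card_sdiff_of_subset has
    refine ⟨a, has, haconn, haconn'.resolve_left hsa, ham, by omega⟩

/-- Union of finpartitions of disjoint finsets. -/
def unionFinpartition {a b : Finset V} (hab : Disjoint a b)
    (Pa : Finpartition a) (Pb : Finpartition b) : Finpartition (a ∪ b) where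
  parts := Pa.parts ∪ Pb.parts
  supIndep := by
    rw [Finset.supIndep_iff_pairwiseDisjoint]
    intro x hx y hy hxy
    simp only [Finset.coe_union, Set.mem_union, Finset.mem_coe] at hx hy
    rcases hx with hx | hx <;> rcases hy with hy | hy
    · exact Pa.disjoint hx hy hxy
    · exact hab.mono (Pa.le hx) (Pb.le hy)
    · exact (hab.symm).mono (Pb.le hx) (Pa.le hy)
    · exact Pb.disjoint hx hy hxy
  sup_parts := by
    rw [Finset.sup_union, Pa.sup_parts, Pb.sup_parts]; rfl
  bot_notMem := by
    simp only [Finset.mem_union, not_or]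
    exact ⟨Pa.bot_notMem, Pb.bot_notMem⟩

lemma unionFinpartition_parts {a b : Finset V} (hab : Disjoint a b)
    (Pa : Finpartition a) (Pb : Finpartition b) :
    (unionFinpartition hab Pa Pb).parts = Pa.parts ∪ Pb.parts := rfl

/-- Main recursion. -/
lemma main [DecidableRel T.Adj] {m : ℕ} (hm : 1 ≤ m) (hdeg : ∀ v, T.degree v ≤ 3) :
    ∀ (n : ℕ) (s : Finset V), s.card ≤ n → Conn T s → m ≤ s.card →
    ∃ P : Finpartition s, ∀ p ∈ P.parts, m ≤ p.card ∧ p.card ≤ 3 * m ∧ Conn T p := by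
  intro n
  induction n with
  | zero => intro s h1 _ h3; omega
  | succ n ih =>
    intro s hsn hconn hms
    by_cases h3 : s.card ≤ 3 * m
    · have hne : s ≠ ⊥ := by
        intro h
        rw [h] at hms
        simp only [Finset.bot_eq_empty, Finset.card_empty] at hms
        omega
      refine ⟨Finpartition.indiscrete hne, ?_⟩
      intro p hp
      simp only [Finpartition.indiscrete, Finset.mem_singleton] at hp
      subst hp
      exact ⟨hms, h3, hconn⟩
    · obtain ⟨a, has, haconn, hsaconn, hma, hmsa⟩ :=
        exists_split hm hdeg hconn (by omega)
      have hsd : (s \ a).card = s.card - a.card := Finset.card_sdiff_of_subset has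
      obtain ⟨Pa, hPa⟩ := ih a (by omega) haconn hma
      obtain ⟨Pb, hPb⟩ := ih (s \ a) (by omega) hsaconn hmsa
      have hdisj : Disjoint a (s \ a) := Finset.disjoint_sdiff
      have hun : a ∪ (s \ a) = s := Finset.union_sdiff_of_subset has
      refine ⟨(unionFinpartition hdisj Pa Pb).copy hun, ?_⟩
      intro p hp
      have hp' : p ∈ Pa.parts ∪ Pb.parts := hp
      rcases Finset.mem_union.1 hp' with hp | hp
      · exact hPa p hp
      · exact hPb p hp

end Stmt18Aux

/-- Every tree on `n ≥ 2k−1` vertices with maximum degree at most 3 can be partitioned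
into vertex-disjoint subtrees (parts inducing connected subgraphs), each with at least
`2k−1` and at most `3(2k−1)` vertices. -/
theorem stmt18 {V : Type*} [Fintype V] [DecidableEq V] (T : SimpleGraph V)
    [DecidableRel T.Adj] (k : ℕ) (hk : 1 ≤ k) (hT : T.IsTree)
    (hdeg : ∀ v : V, T.degree v ≤ 3) (hn : 2 * k - 1 ≤ Fintype.card V) :
    ∃ P : Finpartition (Finset.univ : Finset V),
      ∀ p ∈ P.parts,
        2 * k - 1 ≤ p.card ∧ p.card ≤ 3 * (2 * k - 1) ∧
          (T.induce (p : Set V)).Connected := by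
  classical
  have hm : 1 ≤ 2 * k - 1 := by omega
  have hconn : Stmt18Aux.Conn T (Finset.univ : Finset V) := by
    intro u _ v _
    obtain ⟨w⟩ := hT.isConnected.preconnected u v
    exact ⟨w, fun x _ => Finset.mem_univ x⟩
  have hcard : 2 * k - 1 ≤ (Finset.univ : Finset V).card := by
    rw [Finset.card_univ]; exact hn
  obtain ⟨P, hP⟩ := Stmt18Aux.main hm hdeg (Finset.univ : Finset V).card
    (Finset.univ : Finset V) le_rfl hconn hcard
  refine ⟨P, fun p hp => ?_⟩
  obtain ⟨h1, h2, h3⟩ := hP p hp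
  refine ⟨h1, h2, h3.induce_connected (Finset.card_pos.1 (by omega))⟩
end
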